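/- arXiv:math/0007039 — 2 statements merged into one kernel-verified Lean document; each statement's English description precedes it below -/
import Mathlib

section
/- Suppose 𝔥 is nonzero and that for every u ∈ 𝔥 one has y_u = 0 and 𝗒_u = 0, and that |x_u|² + 2·Re(φ_u·conj(η_u)) ≠ 0 for every u ∈ 𝔥 that does not lie in 𝔘_{2α+2β} (so in particular 𝔷 ⊆ 𝔘_{2α+2β}). Then there exist constants c, C > 0 such that c·‖h‖ ≤ ‖ρ(h)‖ ≤ C·‖h‖ for every h ∈ H. -/
open scoped BigOperators

noncomputable section

/-- The matrix of the Hermitian form defining `SU(2,n)` (indices are 0-based;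
the paper's 1-based entry `(i,j)` corresponds to `(i-1, j-1)` here). -/
def Jmat (n : ℕ) : Matrix (Fin (n+2)) (Fin (n+2)) ℂ := fun i j =>
  if ((i:ℕ) = 0 ∧ (j:ℕ) = n+1) ∨ ((i:ℕ) = 1 ∧ (j:ℕ) = n)
      ∨ ((i:ℕ) = n ∧ (j:ℕ) = 1) ∨ ((i:ℕ) = n+1 ∧ (j:ℕ) = 0)
      ∨ (2 ≤ (i:ℕ) ∧ (i:ℕ) + 1 ≤ n ∧ i = j)
  then 1 else 0

/-- Membership in `G = SU(2,n)`. -/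
def inG (n : ℕ) (g : Matrix (Fin (n+2)) (Fin (n+2)) ℂ) : Prop :=
  g.conjTranspose * Jmat n * g = Jmat n ∧ g.det = 1

/-- Membership in the Lie algebra `𝔫` of strictly upper-triangular matrices `u`
with `uᴴJ + Ju = 0`. -/
def inLieN (n : ℕ) (u : Matrix (Fin (n+2)) (Fin (n+2)) ℂ) : Prop :=
  (∀ i j : Fin (n+2), (j:ℕ) ≤ (i:ℕ) → u i j = 0) ∧
  u.conjTranspose * Jmat n + Jmat n * u = 0

def phiC (n : ℕ) (u : Matrix (Fin (n+2)) (Fin (n+2)) ℂ) : ℂ :=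
  u ⟨0, by omega⟩ ⟨1, by omega⟩

/-- The vector `x_u ∈ ℂ^{n-2}`, padded by zeros to a vector indexed by `Fin (n+2)`
(its meaningful entries sit in columns `2,…,n-1`, i.e. the paper's `3,…,n`). -/
def xV (n : ℕ) (u : Matrix (Fin (n+2)) (Fin (n+2)) ℂ) : Fin (n+2) → ℂ := fun j =>
  if 2 ≤ (j:ℕ) ∧ (j:ℕ) + 1 ≤ n then u ⟨0, by omega⟩ j else 0

/-- The vector `y_u ∈ ℂ^{n-2}`, padded by zeros. -/
def yV (n : ℕ) (u : Matrix (Fin (n+2)) (Fin (n+2)) ℂ) : Fin (n+2) → ℂ := fun j =>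
  if 2 ≤ (j:ℕ) ∧ (j:ℕ) + 1 ≤ n then u ⟨1, by omega⟩ j else 0

def etaC (n : ℕ) (u : Matrix (Fin (n+2)) (Fin (n+2)) ℂ) : ℂ :=
  u ⟨0, by omega⟩ ⟨n, by omega⟩

/-- `𝗑_u = Im u_{1,n+2}`. -/
def sxR (n : ℕ) (u : Matrix (Fin (n+2)) (Fin (n+2)) ℂ) : ℝ :=
  (u ⟨0, by omega⟩ ⟨n+1, by omega⟩).im

/-- `𝗒_u = Im u_{2,n+1}`. -/
def syR (n : ℕ) (u : Matrix (Fin (n+2)) (Fin (n+2)) ℂ) : ℝ :=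
  (u ⟨1, by omega⟩ ⟨n, by omega⟩).im

/-- `x y† = Σ xⱼ ȳⱼ`. -/
def dotC (n : ℕ) (x y : Fin (n+2) → ℂ) : ℂ := ∑ j, x j * (starRingEnd ℂ) (y j)

/-- `|x|²` (a real number). -/
def nsqR (n : ℕ) (x : Fin (n+2) → ℂ) : ℝ := ∑ j, Complex.normSq (x j)

/-- Membership in `𝔷 = {u ∈ 𝔥 : φ_u = 0, x_u = 0, y_u = 0}`. -/
def inZ (n : ℕ) (𝔥 : Submodule ℝ (Matrix (Fin (n+2)) (Fin (n+2)) ℂ))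
    (u : Matrix (Fin (n+2)) (Fin (n+2)) ℂ) : Prop :=
  u ∈ 𝔥 ∧ phiC n u = 0 ∧ xV n u = 0 ∧ yV n u = 0

/-- Membership in the root space `𝔘_{2α+2β}`. -/
def inU2a2b (n : ℕ) (u : Matrix (Fin (n+2)) (Fin (n+2)) ℂ) : Prop :=
  inLieN n u ∧ phiC n u = 0 ∧ xV n u = 0 ∧ yV n u = 0 ∧ etaC n u = 0 ∧ syR n u = 0

/-- `H = exp 𝔥`, the image of `𝔥` under the matrix exponential. -/
def expSet (n : ℕ) (𝔥 : Submodule ℝ (Matrix (Fin (n+2)) (Fin (n+2)) ℂ)) :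
    Set (Matrix (Fin (n+2)) (Fin (n+2)) ℂ) :=
  (fun u => NormedSpace.exp u) '' (𝔥 : Set (Matrix (Fin (n+2)) (Fin (n+2)) ℂ))

/-- `‖h‖`: the maximum of the absolute values of the entries of `h`. -/
def entryNorm (n : ℕ) (h : Matrix (Fin (n+2)) (Fin (n+2)) ℂ) : ℝ :=
  Finset.univ.sup' Finset.univ_nonempty
    (fun p : Fin (n+2) × Fin (n+2) => ‖h p.1 p.2‖)

/-- `‖ρ(h)‖`: the maximum of the absolute values of the determinants of all
`2 × 2` submatrices of `h`. -/
def rhoNorm (n : ℕ) (h : Matrix (Fin (n+2)) (Fin (n+2)) ℂ) : ℝ :=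
  Finset.univ.sup' Finset.univ_nonempty
    (fun q : (Fin (n+2) × Fin (n+2)) × Fin (n+2) × Fin (n+2) =>
      ‖h q.1.1 q.2.1 * h q.1.2 q.2.2 - h q.1.1 q.2.2 * h q.1.2 q.2.1‖)

/-- `Δ(h)`: the determinant of the 2×2 submatrix of `h` in rows 1,2 and
columns n+1, n+2 (1-based). -/
def DeltaC (n : ℕ) (h : Matrix (Fin (n+2)) (Fin (n+2)) ℂ) : ℂ :=
  h ⟨0, by omega⟩ ⟨n, by omega⟩ * h ⟨1, by omega⟩ ⟨n+1, by omega⟩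
    - h ⟨0, by omega⟩ ⟨n+1, by omega⟩ * h ⟨1, by omega⟩ ⟨n, by omega⟩




variable {n : ℕ}

/-- the involution underlying J -/
def sig (n : ℕ) (i : Fin (n+2)) : Fin (n+2) :=
  if (i:ℕ) = 0 then ⟨n+1, by omega⟩ else if (i:ℕ) = 1 then ⟨n, by omega⟩
  else if (i:ℕ) = n then ⟨1, by omega⟩ else if (i:ℕ) = n+1 then ⟨0, by omega⟩ else i

lemma Jmat_eq (hn : 2 ≤ n) (i j : Fin (n+2)) :
    Jmat n i j = if j = sig n i then 1 else 0 := by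
  unfold Jmat sig
  have hi := i.isLt
  have hj := j.isLt
  rcases Nat.lt_or_ge (i:ℕ) 2 with h2 | h2
  · rcases Nat.lt_or_ge (j:ℕ) 2 with g2 | g2 <;>
      split_ifs with h h' <;>
      first
      | rfl
      | (exfalso; simp [Fin.ext_iff, -Fin.val_eq_zero_iff] at * <;> omega)
  · split_ifs with h h' <;>
      first
      | rfl
      | (exfalso; simp [Fin.ext_iff, -Fin.val_eq_zero_iff] at * <;> omega)

lemma sig_sig (hn : 2 ≤ n) (i : Fin (n+2)) : sig n (sig n i) = i := by
  unfold sig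
  have hi := i.isLt
  split_ifs <;> simp_all [Fin.ext_iff, -Fin.val_eq_zero_iff] <;> omega


lemma rel_of_lie (hn : 2 ≤ n) {u : Matrix (Fin (n+2)) (Fin (n+2)) ℂ}
    (hu : inLieN n u) (a b : Fin (n+2)) :
    u a b = - (starRingEnd ℂ) (u (sig n b) (sig n a)) := by
  have h := congrFun (congrFun hu.2 (sig n a)) b
  have h1 : (u.conjTranspose * Jmat n) (sig n a) b
      = (starRingEnd ℂ) (u (sig n b) (sig n a)) := by
    rw [Matrix.mul_apply]
    rw [Finset.sum_eq_single (sig n b)]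
    · rw [Jmat_eq hn, if_pos]
      · simp [Matrix.conjTranspose_apply]
      · rw [sig_sig hn]
    · intro k _ hk
      rw [Jmat_eq hn, if_neg, mul_zero]
      intro hbk
      exact hk (by rw [hbk, sig_sig hn])
    · simp
  have h2 : (Jmat n * u) (sig n a) b = u a b := by
    rw [Matrix.mul_apply]
    rw [Finset.sum_eq_single a]
    · rw [Jmat_eq hn, if_pos (by rw [sig_sig hn]), one_mul]
    · intro k _ hk
      rw [Jmat_eq hn, if_neg, zero_mul]
      intro hkk; exact hk (by rw [hkk, sig_sig hn])
    · simp
  have h0 : (0 : Matrix (Fin (n+2)) (Fin (n+2)) ℂ) (sig n a) b = 0 := rfl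
  rw [Matrix.add_apply, h1, h2, h0] at h
  linear_combination h


def I0 (n : ℕ) : Fin (n+2) := ⟨0, by omega⟩
def I1 (n : ℕ) : Fin (n+2) := ⟨1, by omega⟩
def IN (n : ℕ) : Fin (n+2) := ⟨n, by omega⟩
def IL (n : ℕ) : Fin (n+2) := ⟨n+1, by omega⟩

lemma sig_I0 : sig n (I0 n) = IL n := by
  simp only [sig, I0, IL]
  split_ifs <;> (try rfl) <;> (try simp_all [Fin.ext_iff, -Fin.val_eq_zero_iff]) <;> omega
lemma sig_I1 (hn : 2 ≤ n) : sig n (I1 n) = IN n := by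
  simp only [sig, I1, IN]
  split_ifs <;> (try rfl) <;> (try simp_all [Fin.ext_iff, -Fin.val_eq_zero_iff]) <;> omega
lemma sig_IN (hn : 2 ≤ n) : sig n (IN n) = I1 n := by
  simp only [sig, IN, I1]
  split_ifs <;> (try rfl) <;> (try simp_all [Fin.ext_iff, -Fin.val_eq_zero_iff]) <;> omega
lemma sig_IL : sig n (IL n) = I0 n := by
  simp only [sig, IL, I0]
  split_ifs <;> (try rfl) <;> (try simp_all [Fin.ext_iff, -Fin.val_eq_zero_iff]) <;> omega
lemma sig_mid (hn : 2 ≤ n) (a : Fin (n+2)) (h2 : 2 ≤ (a:ℕ)) (hn1 : (a:ℕ) ≤ n - 1) :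
    sig n a = a := by
  simp only [sig]
  split_ifs <;> (try rfl) <;> (try simp_all [Fin.ext_iff, -Fin.val_eq_zero_iff]) <;> omega

section entries
variable {u : Matrix (Fin (n+2)) (Fin (n+2)) ℂ}

/-- row 1 (0-based) vanishes on columns ≤ n -/
lemma row1_zero (hn : 2 ≤ n) (hu : inLieN n u) (hyv : yV n u = 0) (hsy : syR n u = 0)
    (b : Fin (n+2)) (hb : (b:ℕ) ≤ n) : u (I1 n) b = 0 := by
  rcases Nat.lt_or_ge (b:ℕ) 2 with h | h
  · exact hu.1 _ _ (by simp [I1]; omega)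
  rcases Nat.lt_or_ge (b:ℕ) n with h' | h'
  · have := congrFun hyv b
    simpa [yV, h, Nat.succ_le_of_lt h', I1] using this
  · have hbn : b = IN n := by simp [IN, Fin.ext_iff, -Fin.val_eq_zero_iff]; omega
    subst hbn
    have hr := rel_of_lie hn hu (I1 n) (IN n)
    rw [sig_IN hn, sig_I1 hn] at hr
    have him : (u (I1 n) (IN n)).im = 0 := by simpa [syR, I1, IN] using hsy
    have hre : (u (I1 n) (IN n)).re = 0 := by
      have := congrArg Complex.re hr
      simp at this
      linarith
    exact Complex.ext hre him

/-- rows 2..n+1 vanish on columns ≤ n -/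
lemma rows_zero (hn : 2 ≤ n) (hu : inLieN n u) (hyv : yV n u = 0) (hsy : syR n u = 0)
    (a b : Fin (n+2)) (ha : 2 ≤ (a:ℕ)) (hb : (b:ℕ) ≤ n) : u a b = 0 := by
  rcases le_or_gt (b:ℕ) (a:ℕ) with h | h
  · exact hu.1 _ _ h
  · have hr := rel_of_lie hn hu a b
    rw [sig_mid hn a ha (by omega)] at hr
    rcases Nat.lt_or_ge (b:ℕ) n with h' | h'
    · rw [sig_mid hn b (by omega) (by omega)] at hr
      rw [hr, hu.1 _ _ (le_of_lt h)]
      simp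
    · have hbn : b = IN n := by simp [IN, Fin.ext_iff, -Fin.val_eq_zero_iff]; omega
      subst hbn
      rw [sig_IN hn] at hr
      rw [hr, row1_zero hn hu hyv hsy a (by omega)]
      simp

/-- last column entries in rows 1..n -/
lemma col_last (hn : 2 ≤ n) (hu : inLieN n u) (a : Fin (n+2)) :
    u a (IL n) = - (starRingEnd ℂ) (u (I0 n) (sig n a)) := by
  have hr := rel_of_lie hn hu a (IL n)
  rw [sig_IL] at hr; exact hr

lemma X_re (hn : 2 ≤ n) (hu : inLieN n u) : (u (I0 n) (IL n)).re = 0 := by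
  have hr := rel_of_lie hn hu (I0 n) (IL n)
  rw [sig_IL, sig_I0] at hr
  have := congrArg Complex.re hr
  simp at this; linarith

lemma row_last (hu : inLieN n u) (b : Fin (n+2)) : u (IL n) b = 0 :=
  hu.1 _ _ (by simp [IL]; omega)

lemma diag_zero (hu : inLieN n u) (a : Fin (n+2)) : u a a = 0 := hu.1 _ _ le_rfl

end entries


section sq
variable {u : Matrix (Fin (n+2)) (Fin (n+2)) ℂ}

/-- the real quadratic form -/
def Qr (n : ℕ) (u : Matrix (Fin (n+2)) (Fin (n+2)) ℂ) : ℝ :=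
  nsqR n (xV n u) + 2 * (phiC n u * (starRingEnd ℂ) (etaC n u)).re

lemma usq_main (hn : 2 ≤ n) (hu : inLieN n u) (hyv : yV n u = 0) (hsy : syR n u = 0) :
    (u * u) (I0 n) (IL n) = -((Qr n u : ℝ) : ℂ) := by
  rw [Matrix.mul_apply]
  have hI1 : phiC n u = u (I0 n) (I1 n) := rfl
  have hIN : etaC n u = u (I0 n) (IN n) := rfl
  have key : ∀ k : Fin (n+2), u (I0 n) k * u k (IL n) =
      -((Complex.normSq (xV n u k) : ℝ) : ℂ)
      + ((if k = I1 n then -(phiC n u * (starRingEnd ℂ) (etaC n u)) else 0)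
        + (if k = IN n then -(etaC n u * (starRingEnd ℂ) (phiC n u)) else 0)) := by
    intro k
    have hklt := k.isLt
    rcases Nat.lt_or_ge (k:ℕ) 2 with hk2 | hk2
    · rcases Nat.lt_or_ge (k:ℕ) 1 with hk1 | hk1
      · -- k = 0
        have hk : k = I0 n := by simp [I0, Fin.ext_iff, -Fin.val_eq_zero_iff]; omega
        subst hk
        have h1 : ¬ (I0 n = I1 n) := by simp [I0, I1, Fin.ext_iff, -Fin.val_eq_zero_iff]
        have h2 : ¬ (I0 n = IN n) := by simp [I0, IN, Fin.ext_iff, -Fin.val_eq_zero_iff]; omega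
        have hx : xV n u (I0 n) = 0 := by simp [xV, I0]
        rw [diag_zero hu, zero_mul, if_neg h1, if_neg h2, hx]
        simp
      · -- k = 1
        have hk : k = I1 n := by simp [I1, Fin.ext_iff, -Fin.val_eq_zero_iff]; omega
        subst hk
        have h2 : ¬ (I1 n = IN n) := by simp [I1, IN, Fin.ext_iff, -Fin.val_eq_zero_iff]; omega
        have hcl : u (I1 n) (IL n) = -(starRingEnd ℂ) (u (I0 n) (IN n)) := by
          rw [col_last hn hu, sig_I1 hn]
        have hx : xV n u (I1 n) = 0 := by simp [xV, I1]
        rw [hcl, if_pos rfl, if_neg h2, hx, ← hI1, ← hIN]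
        simp
    rcases Nat.lt_or_ge (k:ℕ) n with hkn | hkn
    · -- middle
      have h1 : ¬ (k = I1 n) := by simp [I1, Fin.ext_iff, -Fin.val_eq_zero_iff]; omega
      have h2 : ¬ (k = IN n) := by simp [IN, Fin.ext_iff, -Fin.val_eq_zero_iff]; omega
      have hcl : u k (IL n) = -(starRingEnd ℂ) (u (I0 n) k) := by
        rw [col_last hn hu, sig_mid hn k hk2 (by omega)]
      have hx : xV n u k = u (I0 n) k := by
        simp only [xV, if_pos (⟨hk2, by omega⟩ : 2 ≤ (k:ℕ) ∧ (k:ℕ)+1 ≤ n)]; rfl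
      rw [hcl, hx, mul_neg, Complex.mul_conj, if_neg h1, if_neg h2]
      simp
    rcases Nat.lt_or_ge (k:ℕ) (n+1) with hkn1 | hkn1
    · -- k = n
      have hk : k = IN n := by simp [IN, Fin.ext_iff, -Fin.val_eq_zero_iff]; omega
      subst hk
      have h1 : ¬ (IN n = I1 n) := by simp [I1, IN, Fin.ext_iff, -Fin.val_eq_zero_iff]; omega
      have hcl : u (IN n) (IL n) = -(starRingEnd ℂ) (u (I0 n) (I1 n)) := by
        rw [col_last hn hu, sig_IN hn]
      have hx : xV n u (IN n) = 0 := by simp [xV, IN] <;> omega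
      rw [hcl, if_neg h1, if_pos rfl, hx, ← hI1, ← hIN]
      simp
    · -- k = n+1
      have hk : k = IL n := by simp [IL, Fin.ext_iff, -Fin.val_eq_zero_iff]; omega
      subst hk
      have h1 : ¬ (IL n = I1 n) := by simp [I1, IL, Fin.ext_iff, -Fin.val_eq_zero_iff]; omega
      have h2 : ¬ (IL n = IN n) := by simp [IN, IL, Fin.ext_iff, -Fin.val_eq_zero_iff] <;> omega
      have hx : xV n u (IL n) = 0 := by simp [xV, IL] <;> omega
      rw [row_last hu, mul_zero, if_neg h1, if_neg h2, hx]
      simp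
  rw [Finset.sum_congr rfl (fun k _ => key k)]
  rw [Finset.sum_add_distrib, Finset.sum_add_distrib, Finset.sum_ite_eq' Finset.univ,
    Finset.sum_ite_eq' Finset.univ]
  simp only [Finset.mem_univ, if_true]
  have hcast : (∑ k, -((Complex.normSq (xV n u k) : ℝ) : ℂ)) = -((nsqR n (xV n u) : ℝ) : ℂ) := by
    rw [Finset.sum_neg_distrib, nsqR]
    push_cast
    ring
  rw [hcast]
  have h := Complex.add_conj (phiC n u * (starRingEnd ℂ) (etaC n u))
  rw [map_mul, Complex.conj_conj] at h
  push_cast at h ⊢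
  rw [Qr]
  push_cast
  linear_combination -h

lemma u_entry_zero (hn : 2 ≤ n) (hu : inLieN n u) (hyv : yV n u = 0) (hsy : syR n u = 0)
    (a b : Fin (n+2)) (ha : 1 ≤ (a:ℕ)) (hb : (b:ℕ) ≤ n) : u a b = 0 := by
  rcases Nat.lt_or_ge (a:ℕ) 2 with h | h
  · have hk : a = I1 n := by simp [I1, Fin.ext_iff, -Fin.val_eq_zero_iff]; omega
    subst hk; exact row1_zero hn hu hyv hsy b hb
  · exact rows_zero hn hu hyv hsy a b h hb

lemma usq_off (hn : 2 ≤ n) (hu : inLieN n u) (hyv : yV n u = 0) (hsy : syR n u = 0)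
    (a b : Fin (n+2)) (hab : ¬(a = I0 n ∧ b = IL n)) : (u * u) a b = 0 := by
  rw [Matrix.mul_apply]
  apply Finset.sum_eq_zero
  intro k _
  rcases Nat.lt_or_ge (a:ℕ) 1 with ha | ha
  · -- a = I0
    have hk : a = I0 n := by simp [I0, Fin.ext_iff, -Fin.val_eq_zero_iff]; omega
    subst hk
    have hbL : (b:ℕ) ≤ n := by
      have := b.isLt
      rcases Nat.lt_or_ge (b:ℕ) (n+1) with h | h
      · omega
      · exact absurd ⟨rfl, by simp [IL, Fin.ext_iff, -Fin.val_eq_zero_iff]; omega⟩ hab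
    rcases Nat.lt_or_ge (k:ℕ) 1 with hk1 | hk1
    · have : k = I0 n := by simp [I0, Fin.ext_iff, -Fin.val_eq_zero_iff]; omega
      subst this; rw [diag_zero hu, zero_mul]
    · rw [u_entry_zero hn hu hyv hsy k b hk1 hbL, mul_zero]
  · -- a ≥ 1
    rcases Nat.lt_or_ge (k:ℕ) (n+1) with hk1 | hk1
    · rw [u_entry_zero hn hu hyv hsy a k ha (by omega), zero_mul]
    · have : k = IL n := by simp [IL, Fin.ext_iff, -Fin.val_eq_zero_iff]; have := k.isLt; omega
      subst this; rw [row_last hu, mul_zero]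

lemma ucube (hn : 2 ≤ n) (hu : inLieN n u) (hyv : yV n u = 0) (hsy : syR n u = 0) :
    u * u * u = 0 := by
  ext a b
  rw [Matrix.mul_apply]
  apply Finset.sum_eq_zero
  intro k _
  by_cases hk : a = I0 n ∧ k = IL n
  · rw [hk.2, row_last hu, mul_zero]
  · rw [usq_off hn hu hyv hsy a k hk, zero_mul]

lemma upow_zero (hn : 2 ≤ n) (hu : inLieN n u) (hyv : yV n u = 0) (hsy : syR n u = 0)
    (m : ℕ) (hm : 3 ≤ m) : u ^ m = 0 := by
  have h3 : u ^ 3 = 0 := by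
    rw [pow_succ, pow_two]
    rw [ucube hn hu hyv hsy]
  obtain ⟨j, rfl⟩ : ∃ j, m = 3 + j := ⟨m - 3, by omega⟩
  rw [pow_add, h3, zero_mul]

lemma exp_eq (hn : 2 ≤ n) (hu : inLieN n u) (hyv : yV n u = 0) (hsy : syR n u = 0) :
    NormedSpace.exp u = 1 + u + (2⁻¹ : ℂ) • (u * u) := by
  rw [NormedSpace.exp_eq_tsum (𝕂 := ℂ)]
  show (∑' (m : ℕ), ((m.factorial : ℂ))⁻¹ • u ^ m) = _
  rw [tsum_eq_sum (s := Finset.range 3) (f := fun m => ((m.factorial : ℂ))⁻¹ • u ^ m)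
    (by
      intro m hm
      show ((m.factorial : ℂ))⁻¹ • u ^ m = 0
      rw [upow_zero hn hu hyv hsy m (by simp [Finset.mem_range] at hm; omega), smul_zero])]
  rw [Finset.sum_range_succ, Finset.sum_range_succ, Finset.sum_range_one]
  norm_num [pow_two]

section expent
variable {u : Matrix (Fin (n+2)) (Fin (n+2)) ℂ}

lemma exp_apply (hn : 2 ≤ n) (hu : inLieN n u) (hyv : yV n u = 0) (hsy : syR n u = 0)
    (a b : Fin (n+2)) :
    NormedSpace.exp u a b = (if a = b then 1 else 0) + u a b + 2⁻¹ * ((u * u) a b) := by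
  rw [exp_eq hn hu hyv hsy]
  simp [Matrix.add_apply, Matrix.smul_apply, Matrix.one_apply, smul_eq_mul]

lemma exp_diag (hn : 2 ≤ n) (hu : inLieN n u) (hyv : yV n u = 0) (hsy : syR n u = 0)
    (a : Fin (n+2)) : NormedSpace.exp u a a = 1 := by
  rw [exp_apply hn hu hyv hsy, diag_zero hu, usq_off hn hu hyv hsy a a
    (by rintro ⟨rfl, h⟩; simp [I0, IL, Fin.ext_iff, -Fin.val_eq_zero_iff] at h)]
  simp

lemma exp_off (hn : 2 ≤ n) (hu : inLieN n u) (hyv : yV n u = 0) (hsy : syR n u = 0)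
    (a b : Fin (n+2)) (hab : a ≠ b) (hX : ¬(a = I0 n ∧ b = IL n)) :
    NormedSpace.exp u a b = u a b := by
  rw [exp_apply hn hu hyv hsy, usq_off hn hu hyv hsy a b hX, if_neg hab]
  ring

lemma exp_X (hn : 2 ≤ n) (hu : inLieN n u) (hyv : yV n u = 0) (hsy : syR n u = 0) :
    NormedSpace.exp u (I0 n) (IL n) = u (I0 n) (IL n) - ((Qr n u / 2 : ℝ) : ℂ) := by
  have hne : I0 n ≠ IL n := by simp [I0, IL, Fin.ext_iff, -Fin.val_eq_zero_iff]
  rw [exp_apply hn hu hyv hsy, usq_main hn hu hyv hsy, if_neg hne]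
  push_cast
  ring

lemma exp_zero (hn : 2 ≤ n) (hu : inLieN n u) (hyv : yV n u = 0) (hsy : syR n u = 0)
    (a b : Fin (n+2)) (ha : 1 ≤ (a:ℕ)) (hb : (b:ℕ) ≤ n) (hab : a ≠ b) :
    NormedSpace.exp u a b = 0 := by
  rw [exp_off hn hu hyv hsy a b hab (by rintro ⟨rfl, rfl⟩; simp [IL] at hb)]
  exact u_entry_zero hn hu hyv hsy a b ha hb

end expent


lemma le_entryNorm (h : Matrix (Fin (n+2)) (Fin (n+2)) ℂ) (a b : Fin (n+2)) :
    ‖h a b‖ ≤ entryNorm n h :=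
  Finset.le_sup' (f := fun p : Fin (n+2) × Fin (n+2) => ‖h p.1 p.2‖)
    (Finset.mem_univ (a, b))

lemma le_rhoNorm (h : Matrix (Fin (n+2)) (Fin (n+2)) ℂ) (r1 r2 c1 c2 : Fin (n+2)) :
    ‖h r1 c1 * h r2 c2 - h r1 c2 * h r2 c1‖ ≤ rhoNorm n h :=
  Finset.le_sup' (f := fun q : (Fin (n+2) × Fin (n+2)) × Fin (n+2) × Fin (n+2) =>
      ‖h q.1.1 q.2.1 * h q.1.2 q.2.2 - h q.1.1 q.2.2 * h q.1.2 q.2.1‖)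
    (Finset.mem_univ ((r1, r2), (c1, c2)))

section nes
variable (n)
lemma ne01 : I0 n ≠ I1 n := by simp [I0, I1, Fin.ext_iff, -Fin.val_eq_zero_iff]
lemma ne0L : I0 n ≠ IL n := by simp [I0, IL, Fin.ext_iff, -Fin.val_eq_zero_iff]
variable {n}
lemma ne0N (hn : 2 ≤ n) : I0 n ≠ IN n := by simp [I0, IN, Fin.ext_iff, -Fin.val_eq_zero_iff]; omega
lemma ne1N (hn : 2 ≤ n) : I1 n ≠ IN n := by simp [I1, IN, Fin.ext_iff, -Fin.val_eq_zero_iff]; omega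
lemma ne1L (hn : 2 ≤ n) : I1 n ≠ IL n := by simp [I1, IL, Fin.ext_iff, -Fin.val_eq_zero_iff]; omega
lemma neNL (hn : 2 ≤ n) : IN n ≠ IL n := by simp [IN, IL, Fin.ext_iff, -Fin.val_eq_zero_iff]
end nes

section lower
variable {u : Matrix (Fin (n+2)) (Fin (n+2)) ℂ}
  (hn : 2 ≤ n) (hu : inLieN n u) (hyv : yV n u = 0) (hsy : syR n u = 0)
include hn hu hyv hsy

lemma one_le_rho : (1:ℝ) ≤ rhoNorm n (NormedSpace.exp u) := by
  have := le_rhoNorm (NormedSpace.exp u) (I0 n) (IL n) (I0 n) (IL n)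
  rwa [exp_diag hn hu hyv hsy, exp_diag hn hu hyv hsy,
    exp_zero hn hu hyv hsy (IL n) (I0 n) (by simp [IL]) (by simp [I0])
      (Ne.symm (ne0L n)),
    mul_zero, one_mul, sub_zero, norm_one] at this

lemma phi_sq_le : ‖phiC n u‖ * ‖phiC n u‖
    ≤ rhoNorm n (NormedSpace.exp u) := by
  have := le_rhoNorm (NormedSpace.exp u) (I0 n) (IN n) (I1 n) (IL n)
  have e1 : NormedSpace.exp u (I0 n) (I1 n) = phiC n u := by
    rw [exp_off hn hu hyv hsy _ _ (ne01 n) (by rintro ⟨-, h⟩; exact (ne1L hn) h)]; rfl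
  have e2 : NormedSpace.exp u (IN n) (IL n) = -(starRingEnd ℂ) (phiC n u) := by
    rw [exp_off hn hu hyv hsy _ _ (neNL hn)
      (by rintro ⟨h, -⟩; exact (ne0N hn) h.symm)]
    rw [col_last hn hu, sig_IN hn]; rfl
  have e3 : NormedSpace.exp u (IN n) (I1 n) = 0 :=
    exp_zero hn hu hyv hsy _ _ (by simp [IN]; omega) (by simp [I1]; omega)
      (Ne.symm (ne1N hn))
  rw [e1, e2, e3, mul_zero, sub_zero, mul_neg, Complex.mul_conj] at this
  calc ‖phiC n u‖ * ‖phiC n u‖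
      = ‖-((Complex.normSq (phiC n u) : ℝ) : ℂ)‖ := by
        rw [norm_neg, Complex.norm_real, Real.norm_eq_abs, abs_of_nonneg (Complex.normSq_nonneg _),
          ← Complex.sq_norm, sq]
    _ ≤ _ := this

lemma eta_sq_le : ‖etaC n u‖ * ‖etaC n u‖
    ≤ rhoNorm n (NormedSpace.exp u) := by
  have := le_rhoNorm (NormedSpace.exp u) (I0 n) (I1 n) (IN n) (IL n)
  have e1 : NormedSpace.exp u (I0 n) (IN n) = etaC n u := by
    rw [exp_off hn hu hyv hsy _ _ (ne0N hn) (by rintro ⟨-, h⟩; exact (neNL hn) h)]; rfl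
  have e2 : NormedSpace.exp u (I1 n) (IL n) = -(starRingEnd ℂ) (etaC n u) := by
    rw [exp_off hn hu hyv hsy _ _ (ne1L hn)
      (by rintro ⟨h, -⟩; exact (ne01 n) h.symm)]
    rw [col_last hn hu, sig_I1 hn]; rfl
  have e3 : NormedSpace.exp u (I1 n) (IN n) = 0 :=
    exp_zero hn hu hyv hsy _ _ (by simp [I1]) (by simp [IN]) (ne1N hn)
  rw [e1, e2, e3, mul_zero, sub_zero, mul_neg, Complex.mul_conj] at this
  calc ‖etaC n u‖ * ‖etaC n u‖
      = ‖-((Complex.normSq (etaC n u) : ℝ) : ℂ)‖ := by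
        rw [norm_neg, Complex.norm_real, Real.norm_eq_abs, abs_of_nonneg (Complex.normSq_nonneg _),
          ← Complex.sq_norm, sq]
    _ ≤ _ := this

lemma phieta_le : ‖phiC n u‖ * ‖etaC n u‖
    ≤ rhoNorm n (NormedSpace.exp u) := by
  have h1 := phi_sq_le hn hu hyv hsy
  have h2 := eta_sq_le hn hu hyv hsy
  have h3 := one_le_rho hn hu hyv hsy
  nlinarith [norm_nonneg (phiC n u), norm_nonneg (etaC n u)]

lemma X_le : ‖NormedSpace.exp u (I0 n) (IL n)‖
    ≤ 2 * rhoNorm n (NormedSpace.exp u) := by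
  have hm := le_rhoNorm (NormedSpace.exp u) (I0 n) (I1 n) (I1 n) (IL n)
  have e1 : NormedSpace.exp u (I0 n) (I1 n) = phiC n u := by
    rw [exp_off hn hu hyv hsy _ _ (ne01 n) (by rintro ⟨-, h⟩; exact (ne1L hn) h)]; rfl
  have e2 : NormedSpace.exp u (I1 n) (IL n) = -(starRingEnd ℂ) (etaC n u) := by
    rw [exp_off hn hu hyv hsy _ _ (ne1L hn)
      (by rintro ⟨h, -⟩; exact (ne01 n) h.symm)]
    rw [col_last hn hu, sig_I1 hn]; rfl
  have e3 : NormedSpace.exp u (I1 n) (I1 n) = 1 := exp_diag hn hu hyv hsy _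
  rw [e1, e2, e3, mul_one] at hm
  set A := phiC n u * -(starRingEnd ℂ) (etaC n u) with hA
  set X' := NormedSpace.exp u (I0 n) (IL n) with hX'
  have hAabs : ‖A‖ = ‖phiC n u‖ * ‖etaC n u‖ := by
    rw [hA, norm_mul, norm_neg, Complex.norm_conj]
  have key : ‖X'‖ ≤ ‖A - X'‖ + ‖A‖ := by
    have h2 : A - (A - X') = X' := by ring
    calc ‖X'‖ = ‖A - (A - X')‖ := by rw [h2]
      _ ≤ ‖A‖ + ‖A - X'‖ := norm_sub_le _ _
      _ = ‖A - X'‖ + ‖A‖ := by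
          ring
  have := phieta_le hn hu hyv hsy
  rw [hAabs] at key
  linarith

lemma x_sq_le (b : Fin (n+2)) (hb2 : 2 ≤ (b:ℕ)) (hbn : (b:ℕ) ≤ n - 1) :
    ‖u (I0 n) b‖ * ‖u (I0 n) b‖
      ≤ 3 * rhoNorm n (NormedSpace.exp u) := by
  have hm := le_rhoNorm (NormedSpace.exp u) (I0 n) b b (IL n)
  have hb0 : I0 n ≠ b := by simp [I0, Fin.ext_iff, -Fin.val_eq_zero_iff]; omega
  have hbL : b ≠ IL n := by simp [IL, Fin.ext_iff, -Fin.val_eq_zero_iff]; omega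
  have e1 : NormedSpace.exp u (I0 n) b = u (I0 n) b := by
    rw [exp_off hn hu hyv hsy _ _ hb0 (by rintro ⟨-, h⟩; exact hbL h)]
  have e2 : NormedSpace.exp u b (IL n) = -(starRingEnd ℂ) (u (I0 n) b) := by
    rw [exp_off hn hu hyv hsy _ _ hbL
      (by rintro ⟨h, -⟩; exact hb0 h.symm)]
    rw [col_last hn hu, sig_mid hn b hb2 hbn]
  have e3 : NormedSpace.exp u b b = 1 := exp_diag hn hu hyv hsy _
  rw [e1, e2, e3, mul_one, mul_neg, Complex.mul_conj] at hm
  set X' := NormedSpace.exp u (I0 n) (IL n) with hX'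
  set N := ((Complex.normSq (u (I0 n) b) : ℝ) : ℂ) with hN
  have key : ‖N‖ ≤ ‖-N - X'‖ + ‖X'‖ := by
    have h2 : -(-N - X') - X' = N := by ring
    calc ‖N‖ = ‖-(-N - X') - X'‖ := by rw [h2]
      _ ≤ ‖-(-N - X')‖ + ‖X'‖ := norm_sub_le _ _
      _ = ‖-N - X'‖ + ‖X'‖ := by
          rw [norm_neg]
  have h3 := X_le hn hu hyv hsy
  have hNabs : ‖N‖ = ‖u (I0 n) b‖ * ‖u (I0 n) b‖ := by
    rw [hN, Complex.norm_real, Real.norm_eq_abs, abs_of_nonneg (Complex.normSq_nonneg _),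
      ← Complex.sq_norm, sq]
  rw [hNabs] at key
  calc ‖u (I0 n) b‖ * ‖u (I0 n) b‖
      ≤ ‖-N - X'‖ + ‖X'‖ := key
    _ ≤ rhoNorm n (NormedSpace.exp u) + 2 * rhoNorm n (NormedSpace.exp u) := by
        exact add_le_add hm h3
    _ = 3 * rhoNorm n (NormedSpace.exp u) := by ring
end lower

section lower2
variable {u : Matrix (Fin (n+2)) (Fin (n+2)) ℂ}
  (hn : 2 ≤ n) (hu : inLieN n u) (hyv : yV n u = 0) (hsy : syR n u = 0)
include hn hu hyv hsy

lemma entry_le_rho : entryNorm n (NormedSpace.exp u)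
    ≤ 3 * rhoNorm n (NormedSpace.exp u) := by
  set M := rhoNorm n (NormedSpace.exp u) with hMdef
  have hM1 : 1 ≤ M := one_le_rho hn hu hyv hsy
  have hphi : ‖phiC n u‖ ≤ 3 * M := by
    have := phi_sq_le hn hu hyv hsy
    nlinarith [sq_nonneg (‖phiC n u‖ - 1)]
  have heta : ‖etaC n u‖ ≤ 3 * M := by
    have := eta_sq_le hn hu hyv hsy
    nlinarith [sq_nonneg (‖etaC n u‖ - 1)]
  have hx : ∀ b : Fin (n+2), 2 ≤ (b:ℕ) → (b:ℕ) ≤ n - 1 →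
      ‖u (I0 n) b‖ ≤ 3 * M := by
    intro b h1 h2
    have := x_sq_le hn hu hyv hsy b h1 h2
    nlinarith [sq_nonneg (‖u (I0 n) b‖ - 1)]
  apply Finset.sup'_le
  rintro ⟨a, b⟩ -
  dsimp only
  by_cases hab : a = b
  · subst hab
    rw [exp_diag hn hu hyv hsy, norm_one]
    linarith
  rcases Nat.lt_or_ge (a:ℕ) 1 with ha | ha
  · -- a = I0
    have haI : a = I0 n := by simp [I0, Fin.ext_iff, -Fin.val_eq_zero_iff]; omega
    subst haI
    have hblt := b.isLt
    rcases Nat.lt_or_ge (b:ℕ) 2 with hb2 | hb2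
    · have hbI : b = I1 n := by
        simp only [I1, Fin.ext_iff, -Fin.val_eq_zero_iff]
        have : (b:ℕ) ≠ 0 := by
          intro h0; exact hab (by simp [I0, Fin.ext_iff, -Fin.val_eq_zero_iff]; omega)
        omega
      subst hbI
      have e1 : NormedSpace.exp u (I0 n) (I1 n) = phiC n u := by
        rw [exp_off hn hu hyv hsy _ _ (ne01 n) (by rintro ⟨-, h⟩; exact (ne1L hn) h)]; rfl
      rw [e1]; exact hphi
    rcases Nat.lt_or_ge (b:ℕ) n with hbn | hbn
    · have hb0 : I0 n ≠ b := by simp [I0, Fin.ext_iff, -Fin.val_eq_zero_iff]; omega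
      have hbL : b ≠ IL n := by simp [IL, Fin.ext_iff, -Fin.val_eq_zero_iff]; omega
      rw [exp_off hn hu hyv hsy _ _ hb0 (by rintro ⟨-, h⟩; exact hbL h)]
      exact hx b hb2 (by omega)
    rcases Nat.lt_or_ge (b:ℕ) (n+1) with hbn1 | hbn1
    · have hbI : b = IN n := by simp [IN, Fin.ext_iff, -Fin.val_eq_zero_iff]; omega
      subst hbI
      have e1 : NormedSpace.exp u (I0 n) (IN n) = etaC n u := by
        rw [exp_off hn hu hyv hsy _ _ (ne0N hn) (by rintro ⟨-, h⟩; exact (neNL hn) h)]; rfl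
      rw [e1]; exact heta
    · have hbI : b = IL n := by simp [IL, Fin.ext_iff, -Fin.val_eq_zero_iff]; omega
      subst hbI
      have := X_le hn hu hyv hsy
      linarith
  · -- a ≥ 1
    rcases Nat.lt_or_ge (b:ℕ) (n+1) with hbn | hbn
    · rw [exp_zero hn hu hyv hsy a b ha (by omega) hab, norm_zero]
      linarith
    · have hbI : b = IL n := by simp [IL, Fin.ext_iff, -Fin.val_eq_zero_iff]; have := b.isLt; omega
      subst hbI
      have haL : (a:ℕ) ≤ n := by
        have := a.isLt
        rcases Nat.lt_or_ge (a:ℕ) (n+1) with h | h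
        · omega
        · exact absurd (by simp [IL, Fin.ext_iff, -Fin.val_eq_zero_iff]; omega : a = IL n) hab
      have e1 : NormedSpace.exp u a (IL n) = -(starRingEnd ℂ) (u (I0 n) (sig n a)) := by
        rw [exp_off hn hu hyv hsy _ _ hab
          (by rintro ⟨h, -⟩; rw [h] at ha; simp [I0] at ha)]
        rw [col_last hn hu]
      rw [e1, norm_neg, Complex.norm_conj]
      rcases Nat.lt_or_ge (a:ℕ) 2 with ha2 | ha2
      · have haI : a = I1 n := by simp [I1, Fin.ext_iff, -Fin.val_eq_zero_iff]; omega
        subst haI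
        rw [sig_I1 hn]
        exact heta
      rcases Nat.lt_or_ge (a:ℕ) n with han | han
      · rw [sig_mid hn a ha2 (by omega)]
        exact hx a ha2 (by omega)
      · have haI : a = IN n := by simp [IN, Fin.ext_iff, -Fin.val_eq_zero_iff]; omega
        subst haI
        rw [sig_IN hn]
        exact hphi
end lower2

def wL (n : ℕ) (u : Matrix (Fin (n+2)) (Fin (n+2)) ℂ) : Fin (n+2) → ℂ := fun b =>
  if (b:ℕ) = n+1 then 0 else u (I0 n) b

lemma abs_wL_le (u : Matrix (Fin (n+2)) (Fin (n+2)) ℂ) (b : Fin (n+2)) :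
    ‖wL n u b‖ ≤ ‖wL n u‖ := by
  have := norm_le_pi_norm (wL n u) b
  exact this

lemma wL_eq (u : Matrix (Fin (n+2)) (Fin (n+2)) ℂ) (b : Fin (n+2)) (hb : (b:ℕ) ≠ n+1) :
    wL n u b = u (I0 n) b := by
  rw [wL, if_neg hb]

lemma sig_le_n (hn : 2 ≤ n) (a : Fin (n+2)) (h1 : 1 ≤ (a:ℕ)) (h2 : (a:ℕ) ≤ n) :
    ((sig n a : Fin (n+2)) : ℕ) ≤ n := by
  simp only [sig]
  split_ifs <;> (try simp) <;> omega

section upper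
variable {u : Matrix (Fin (n+2)) (Fin (n+2)) ℂ}
  (hn : 2 ≤ n) (hu : inLieN n u) (hyv : yV n u = 0) (hsy : syR n u = 0)
include hn hu hyv hsy

lemma ent_le_one (a b : Fin (n+2)) (ha : a ≠ I0 n) (hb : b ≠ IL n) :
    ‖NormedSpace.exp u a b‖ ≤ 1 := by
  by_cases hab : a = b
  · subst hab; rw [exp_diag hn hu hyv hsy, norm_one]
  · rw [exp_zero hn hu hyv hsy a b
      (by simp [I0, Fin.ext_iff, -Fin.val_eq_zero_iff] at ha; omega)
      (by simp [IL, Fin.ext_iff, -Fin.val_eq_zero_iff] at hb; have := b.isLt; omega) hab, norm_zero]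
    norm_num

lemma ent_le_maxw (a b : Fin (n+2)) (hX : ¬(a = I0 n ∧ b = IL n)) :
    ‖NormedSpace.exp u a b‖ ≤ max 1 ‖wL n u‖ := by
  by_cases hab : a = b
  · subst hab; rw [exp_diag hn hu hyv hsy, norm_one]; exact le_max_left _ _
  rw [exp_off hn hu hyv hsy a b hab hX]
  rcases Nat.lt_or_ge (a:ℕ) 1 with ha | ha
  · have haI : a = I0 n := by simp [I0, Fin.ext_iff, -Fin.val_eq_zero_iff]; omega
    subst haI
    have hbL : b ≠ IL n := fun h => hX ⟨rfl, h⟩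
    have hbv : (b:ℕ) ≠ n+1 := by
      simp [IL, Fin.ext_iff, -Fin.val_eq_zero_iff] at hbL; have := b.isLt; omega
    rw [← wL_eq u b hbv]
    exact le_trans (abs_wL_le u b) (le_max_right _ _)
  rcases Nat.lt_or_ge (b:ℕ) (n+1) with hb | hb
  · rw [u_entry_zero hn hu hyv hsy a b ha (by omega), norm_zero]
    exact le_trans zero_le_one (le_max_left _ _)
  · have hbI : b = IL n := by simp [IL, Fin.ext_iff, -Fin.val_eq_zero_iff]; have := b.isLt; omega
    subst hbI
    have haL : (a:ℕ) ≤ n := by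
      have := a.isLt
      rcases Nat.lt_or_ge (a:ℕ) (n+1) with h | h
      · omega
      · exact absurd (by simp [IL, Fin.ext_iff, -Fin.val_eq_zero_iff]; omega : a = IL n) hab
    rw [col_last hn hu, norm_neg, Complex.norm_conj]
    have hsv : ((sig n a : Fin (n+2)) : ℕ) ≠ n+1 := by
      have := sig_le_n hn a ha haL; omega
    rw [← wL_eq u _ hsv]
    exact le_trans (abs_wL_le u _) (le_max_right _ _)

lemma rho_le_upper (ε : ℝ) (hε : 0 < ε)
    (hQ : ε * (‖wL n u‖ * ‖wL n u‖) ≤ |Qr n u|) :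
    rhoNorm n (NormedSpace.exp u) ≤ (2 * max 1 (2/ε)) * entryNorm n (NormedSpace.exp u) := by
  set T := entryNorm n (NormedSpace.exp u) with hT
  have hT1 : (1:ℝ) ≤ T := by
    have := le_entryNorm (NormedSpace.exp u) (I0 n) (I0 n)
    rwa [exp_diag hn hu hyv hsy, norm_one] at this
  have hmax1 : (1:ℝ) ≤ max 1 (2/ε) := le_max_left _ _
  have hww : ‖wL n u‖ * ‖wL n u‖ ≤ (2/ε) * T := by
    have hre : (NormedSpace.exp u (I0 n) (IL n)).re = -(Qr n u)/2 := by
      rw [exp_X hn hu hyv hsy, Complex.sub_re, Complex.ofReal_re, X_re hn hu]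
      ring
    have habs : |Qr n u| ≤ 2 * T := by
      have h1 : |(NormedSpace.exp u (I0 n) (IL n)).re|
          ≤ ‖NormedSpace.exp u (I0 n) (IL n)‖ := Complex.abs_re_le_norm _
      have h2 := le_entryNorm (NormedSpace.exp u) (I0 n) (IL n)
      rw [hre] at h1
      rw [abs_div] at h1
      simp only [abs_neg, abs_two] at h1
      have : |Qr n u| / 2 ≤ T := le_trans h1 h2
      linarith
    rw [div_mul_eq_mul_div, le_div_iff₀ hε]
    nlinarith
  have hprod : ∀ r c r' c', r ≠ r' → c ≠ c' →
      ‖NormedSpace.exp u r c‖ * ‖NormedSpace.exp u r' c'‖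
        ≤ max 1 (2/ε) * T := by
    intro r c r' c' hr hc
    by_cases h1 : r = I0 n ∧ c = IL n
    · obtain ⟨rfl, rfl⟩ := h1
      have hb1 : ‖NormedSpace.exp u r' c'‖ ≤ 1 :=
        ent_le_one hn hu hyv hsy r' c' (Ne.symm hr) (Ne.symm hc)
      calc ‖NormedSpace.exp u (I0 n) (IL n)‖
            * ‖NormedSpace.exp u r' c'‖
          ≤ T * 1 := mul_le_mul (le_entryNorm _ _ _) hb1 (norm_nonneg _)
              (by linarith)
        _ = T := mul_one T
        _ ≤ max 1 (2/ε) * T := le_mul_of_one_le_left (by linarith) hmax1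
    by_cases h2 : r' = I0 n ∧ c' = IL n
    · obtain ⟨rfl, rfl⟩ := h2
      have hb1 : ‖NormedSpace.exp u r c‖ ≤ 1 :=
        ent_le_one hn hu hyv hsy r c hr hc
      calc ‖NormedSpace.exp u r c‖
            * ‖NormedSpace.exp u (I0 n) (IL n)‖
          ≤ 1 * T := mul_le_mul hb1 (le_entryNorm _ _ _) (norm_nonneg _)
              zero_le_one
        _ = T := one_mul T
        _ ≤ max 1 (2/ε) * T := le_mul_of_one_le_left (by linarith) hmax1
    · have hb1 := ent_le_maxw hn hu hyv hsy r c h1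
      have hb2 := ent_le_maxw hn hu hyv hsy r' c' h2
      have hw0 : (0:ℝ) ≤ ‖wL n u‖ := norm_nonneg _
      have key : max 1 ‖wL n u‖ * max 1 ‖wL n u‖ ≤ max 1 (2/ε) * T := by
        rcases le_total ‖wL n u‖ 1 with h | h
        · rw [max_eq_left h]
          nlinarith
        · rw [max_eq_right h]
          have h2e : 2/ε ≤ max 1 (2/ε) := le_max_right _ _
          nlinarith
      calc ‖NormedSpace.exp u r c‖
            * ‖NormedSpace.exp u r' c'‖
          ≤ max 1 ‖wL n u‖ * max 1 ‖wL n u‖ :=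
            mul_le_mul hb1 hb2 (norm_nonneg _) (by positivity)
        _ ≤ max 1 (2/ε) * T := key
  apply Finset.sup'_le
  rintro ⟨⟨r1, r2⟩, c1, c2⟩ -
  dsimp only
  by_cases hr : r1 = r2
  · subst hr
    rw [show NormedSpace.exp u r1 c1 * NormedSpace.exp u r1 c2
        - NormedSpace.exp u r1 c2 * NormedSpace.exp u r1 c1 = 0 by ring, norm_zero]
    nlinarith
  by_cases hc : c1 = c2
  · subst hc
    rw [show NormedSpace.exp u r1 c1 * NormedSpace.exp u r2 c1
        - NormedSpace.exp u r1 c1 * NormedSpace.exp u r2 c1 = 0 by ring, norm_zero]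
    nlinarith
  calc ‖NormedSpace.exp u r1 c1 * NormedSpace.exp u r2 c2
        - NormedSpace.exp u r1 c2 * NormedSpace.exp u r2 c1‖
      ≤ ‖NormedSpace.exp u r1 c1 * NormedSpace.exp u r2 c2‖
        + ‖NormedSpace.exp u r1 c2 * NormedSpace.exp u r2 c1‖ := by
        have := norm_sub_le (NormedSpace.exp u r1 c1 * NormedSpace.exp u r2 c2)
          (NormedSpace.exp u r1 c2 * NormedSpace.exp u r2 c1)
        exact this
    _ ≤ max 1 (2/ε) * T + max 1 (2/ε) * T := by
        rw [norm_mul, norm_mul]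
        exact add_le_add (hprod r1 c1 r2 c2 hr hc) (hprod r1 c2 r2 c1 hr (Ne.symm hc))
    _ = (2 * max 1 (2/ε)) * T := by ring
end upper

def Lmap (n : ℕ) : Matrix (Fin (n+2)) (Fin (n+2)) ℂ →ₗ[ℝ] (Fin (n+2) → ℂ) where
  toFun u := wL n u
  map_add' u v := by
    funext b
    by_cases h : (b:ℕ) = n+1 <;> simp [wL, h, Matrix.add_apply]
  map_smul' r u := by
    funext b
    by_cases h : (b:ℕ) = n+1 <;> simp [wL, h, Matrix.smul_apply]

def Qfun (n : ℕ) (w : Fin (n+2) → ℂ) : ℝ :=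
  (∑ j : Fin (n+2), if 2 ≤ (j:ℕ) ∧ (j:ℕ)+1 ≤ n then Complex.normSq (w j) else 0)
  + 2 * (w (I1 n) * (starRingEnd ℂ) (w (IN n))).re

lemma Qfun_wL (hn : 2 ≤ n) (u : Matrix (Fin (n+2)) (Fin (n+2)) ℂ) :
    Qfun n (wL n u) = Qr n u := by
  unfold Qfun Qr nsqR
  congr 1
  · apply Finset.sum_congr rfl
    intro j _
    by_cases hc : 2 ≤ (j:ℕ) ∧ (j:ℕ)+1 ≤ n
    · rw [if_pos hc]
      have hj : (j:ℕ) ≠ n+1 := by omega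
      rw [wL_eq u j hj]
      simp only [xV, if_pos hc]
      rfl
    · rw [if_neg hc]
      simp only [xV, if_neg hc, map_zero]
  · have h1 : wL n u (I1 n) = phiC n u := by
      rw [wL_eq u _ (by simp only [I1]; omega)]; rfl
    have h2 : wL n u (IN n) = etaC n u := by
      rw [wL_eq u _ (by simp only [IN]; omega)]; rfl
    rw [h1, h2]

lemma Qfun_cont (n : ℕ) : Continuous (Qfun n) := by
  apply Continuous.add
  · apply continuous_finset_sum
    intro j _
    by_cases hc : 2 ≤ (j:ℕ) ∧ (j:ℕ)+1 ≤ n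
    · simp only [if_pos hc]
      exact Complex.continuous_normSq.comp (continuous_apply j)
    · simp only [if_neg hc]
      exact continuous_const
  · apply Continuous.mul continuous_const
    exact Complex.continuous_re.comp
      ((continuous_apply (I1 n)).mul
        (Complex.continuous_conj.comp (continuous_apply (IN n))))

lemma Qfun_smul (n : ℕ) (r : ℝ) (w : Fin (n+2) → ℂ) :
    Qfun n (r • w) = r^2 * Qfun n w := by
  unfold Qfun
  rw [mul_add, Finset.mul_sum]
  congr 1
  · apply Finset.sum_congr rfl
    intro j _
    by_cases hc : 2 ≤ (j:ℕ) ∧ (j:ℕ)+1 ≤ n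
    · rw [if_pos hc, if_pos hc]
      have : (r • w) j = (r:ℂ) * w j := by simp [Complex.real_smul]
      rw [this, Complex.normSq_mul, Complex.normSq_ofReal]
      ring
    · rw [if_neg hc, if_neg hc, mul_zero]
  · have h1 : (r • w) (I1 n) = (r:ℂ) * w (I1 n) := by simp [Complex.real_smul]
    have h2 : (r • w) (IN n) = (r:ℂ) * w (IN n) := by simp [Complex.real_smul]
    rw [h1, h2, map_mul, Complex.conj_ofReal]
    have : (r:ℂ) * w (I1 n) * ((r:ℂ) * (starRingEnd ℂ) (w (IN n)))
        = ((r*r : ℝ) : ℂ) * (w (I1 n) * (starRingEnd ℂ) (w (IN n))) := by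
      push_cast; ring
    rw [this, Complex.re_ofReal_mul]
    ring

lemma exists_eps (hn : 2 ≤ n) (𝔥 : Submodule ℝ (Matrix (Fin (n+2)) (Fin (n+2)) ℂ))
    (hQ' : ∀ u ∈ 𝔥, wL n u ≠ 0 → Qr n u ≠ 0) :
    ∃ ε : ℝ, 0 < ε ∧ ∀ u ∈ 𝔥, ε * (‖wL n u‖ * ‖wL n u‖) ≤ |Qr n u| := by
  set W := 𝔥.map (Lmap n) with hW
  by_cases hW0 : ∀ w ∈ W, w = (0 : Fin (n+2) → ℂ)
  · refine ⟨1, one_pos, ?_⟩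
    intro u hu
    have h0 : wL n u = 0 := hW0 _ ⟨u, hu, rfl⟩
    rw [h0, norm_zero]
    simpa using abs_nonneg (Qr n u)
  · push_neg at hW0
    obtain ⟨w0, hw0W, hw0⟩ := hW0
    set S := Metric.sphere (0 : Fin (n+2) → ℂ) 1 ∩ (W : Set (Fin (n+2) → ℂ)) with hS
    have hScomp : IsCompact S :=
      (isCompact_sphere 0 1).inter_right (Submodule.closed_of_finiteDimensional W)
    have hSne : S.Nonempty := by
      refine ⟨‖w0‖⁻¹ • w0, ?_, W.smul_mem _ hw0W⟩
      simp [norm_smul, norm_ne_zero_iff.mpr hw0, abs_of_nonneg (inv_nonneg.mpr (norm_nonneg w0)),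
        inv_mul_cancel₀ (norm_ne_zero_iff.mpr hw0)]
    obtain ⟨wm, hwmS, hmin'⟩ := hScomp.exists_isMinOn hSne
      ((continuous_abs.comp (Qfun_cont n)).continuousOn)
    have hmin : ∀ w ∈ S, |Qfun n wm| ≤ |Qfun n w| := fun w hw => hmin' hw
    have hεpos : 0 < |Qfun n wm| := by
      rcases hwmS.2 with ⟨um, hum, humeq⟩
      have hwm0 : wm ≠ 0 := by
        intro h
        have := hwmS.1
        rw [h] at this
        simp at this
      rw [abs_pos]
      have : wL n um = wm := humeq
      rw [← this, Qfun_wL hn]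
      exact hQ' um hum (by rw [this]; exact hwm0)
    refine ⟨|Qfun n wm|, hεpos, ?_⟩
    intro u hu
    by_cases h0 : wL n u = 0
    · rw [h0, norm_zero]
      simpa using abs_nonneg (Qr n u)
    · set r := ‖wL n u‖ with hr
      have hrpos : 0 < r := norm_pos_iff.mpr h0
      have hwin : r⁻¹ • wL n u ∈ S := by
        constructor
        · have : ‖r⁻¹ • wL n u‖ = |r⁻¹| * ‖wL n u‖ := by rw [norm_smul]; rfl
          simp only [mem_sphere_iff_norm, sub_zero, this,
            abs_of_nonneg (inv_nonneg.mpr (norm_nonneg (wL n u)))]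
          rw [abs_of_nonneg (inv_nonneg.mpr hrpos.le)]
          exact inv_mul_cancel₀ (ne_of_gt hrpos)
        · exact W.smul_mem _ ⟨u, hu, rfl⟩
      have hms := hmin _ hwin
      rw [Qfun_smul, abs_mul, Qfun_wL hn] at hms
      have hsq : |(r⁻¹)^2| = (r⁻¹)^2 := abs_of_nonneg (sq_nonneg _)
      rw [hsq] at hms
      have hstep : |Qfun n wm| * (r * r) ≤ (r⁻¹)^2 * |Qr n u| * (r * r) := by
        nlinarith
      calc |Qfun n wm| * (r * r) ≤ (r⁻¹)^2 * |Qr n u| * (r * r) := hstep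
        _ = |Qr n u| := by
            have hr2 : r ≠ 0 := ne_of_gt hrpos
            rw [show (r⁻¹)^2 * |Qr n u| * (r*r)
              = |Qr n u| * ((r⁻¹*r) * (r⁻¹*r)) from by ring, inv_mul_cancel₀ hr2]
            ring

theorem stmt15 (n : ℕ) (hn : 2 ≤ n)
    (𝔥 : Submodule ℝ (Matrix (Fin (n+2)) (Fin (n+2)) ℂ))
    (h_sub : ∀ u ∈ 𝔥, inLieN n u)
    (h_bracket : ∀ u ∈ 𝔥, ∀ v ∈ 𝔥, u * v - v * u ∈ 𝔥)
    (hne : 𝔥 ≠ ⊥)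
    (hy : ∀ u ∈ 𝔥, yV n u = 0 ∧ syR n u = 0)
    (hq : ∀ u ∈ 𝔥, ¬ inU2a2b n u →
      nsqR n (xV n u) + 2 * (phiC n u * (starRingEnd ℂ) (etaC n u)).re ≠ 0) :
    ∃ c C : ℝ, 0 < c ∧ 0 < C ∧
      ∀ h ∈ expSet n 𝔥, c * entryNorm n h ≤ rhoNorm n h ∧
        rhoNorm n h ≤ C * entryNorm n h := by
  have hQ' : ∀ u ∈ 𝔥, wL n u ≠ 0 → Qr n u ≠ 0 := by
    intro u hu hw
    have hlie := h_sub u hu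
    have hnU : ¬ inU2a2b n u := by
      intro hU
      apply hw
      obtain ⟨hl, hphi, hx, hyv', heta, hsy'⟩ := hU
      funext b
      show (if (b:ℕ) = n+1 then 0 else u (I0 n) b) = 0
      by_cases hb : (b:ℕ) = n+1
      · rw [if_pos hb]
      rw [if_neg hb]
      have hblt := b.isLt
      rcases Nat.lt_or_ge (b:ℕ) 1 with h1 | h1
      · have : b = I0 n := by simp [I0, Fin.ext_iff, -Fin.val_eq_zero_iff]; omega
        rw [this]
        exact diag_zero hlie _
      rcases Nat.lt_or_ge (b:ℕ) 2 with h2 | h2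
      · have : b = I1 n := by simp [I1, Fin.ext_iff, -Fin.val_eq_zero_iff]; omega
        rw [this]
        exact hphi
      rcases Nat.lt_or_ge (b:ℕ) n with h3 | h3
      · have := congrFun hx b
        simpa [xV, h2, Nat.succ_le_of_lt h3, I0] using this
      · have : b = IN n := by simp [IN, Fin.ext_iff, -Fin.val_eq_zero_iff]; omega
        rw [this]
        exact heta
    exact hq u hu hnU
  obtain ⟨ε, hεpos, heps⟩ := exists_eps hn 𝔥 hQ'
  have hmaxpos : (0:ℝ) < max 1 (2/ε) := lt_of_lt_of_le one_pos (le_max_left _ _)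
  refine ⟨1/3, 2 * max 1 (2/ε), by norm_num, by linarith, ?_⟩
  intro h hh
  obtain ⟨u, hu𝔥, rfl⟩ := hh
  have hlie := h_sub u hu𝔥
  obtain ⟨hyv, hsy⟩ := hy u hu𝔥
  constructor
  · have h3 := entry_le_rho hn hlie hyv hsy
    linarith
  · exact rho_le_upper hn hlie hyv hsy ε hεpos (heps u hu𝔥)
end sq
end
end

section
/- Suppose dim_ℝ 𝔥 = 1, 𝔷 = {0}, there is some u ∈ 𝔥 with φ_u ≠ 0, and there is a nonzero complex number φ₀ such that for every v ∈ 𝔥 one has φ_v = φ₀·𝗒_v and y_v = 0. Then there exist constants c, C > 0 such that c·‖h‖^{4/3} ≤ ‖ρ(h)‖ ≤ C·‖h‖^{4/3} for every h ∈ H. -/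
open scoped BigOperators

noncomputable section

namespace Stmt17Aux

def sig (n : ℕ) : Fin (n+2) → Fin (n+2) := fun i =>
  if (i:ℕ) = 0 then ⟨n+1, by omega⟩
  else if (i:ℕ) = 1 then ⟨n, by omega⟩
  else if (i:ℕ) = n then ⟨1, by omega⟩
  else if (i:ℕ) = n+1 then ⟨0, by omega⟩
  else i

variable {n : ℕ}

lemma sig_val (hn : 2 ≤ n) (i : Fin (n+2)) : ((sig n i : Fin (n+2)) : ℕ) =
    if (i:ℕ) = 0 then n+1 else if (i:ℕ) = 1 then n else if (i:ℕ) = n then 1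
      else if (i:ℕ) = n+1 then 0 else (i:ℕ) := by
  unfold sig; split_ifs <;> rfl

lemma sig_sig (hn : 2 ≤ n) (i : Fin (n+2)) : sig n (sig n i) = i := by
  have hi := i.isLt
  have h1 := sig_val hn i
  have h2 := sig_val hn (sig n i)
  apply Fin.ext
  rw [h2, h1] at *
  split_ifs at * <;> omega

lemma Jmat_eq (hn : 2 ≤ n) (i j : Fin (n+2)) :
    Jmat n i j = if j = sig n i then 1 else 0 := by
  have hi := i.isLt
  have hj := j.isLt
  have hs := sig_val hn i
  unfold Jmat
  by_cases h : j = sig n i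
  · subst h
    rw [if_pos ?_, if_pos rfl]
    rw [Fin.ext_iff] at *
    simp only [hs]
    split_ifs at hs ⊢ <;> omega
  · rw [if_neg ?_, if_neg h]
    rw [Fin.ext_iff] at h
    rw [hs] at h
    simp only [Fin.ext_iff]
    intro hcon
    split_ifs at h <;> omega

lemma Jmat_eq' (hn : 2 ≤ n) (i j : Fin (n+2)) :
    Jmat n i j = if i = sig n j then 1 else 0 := by
  rw [Jmat_eq hn]
  congr 1
  simp only [eq_iff_iff]
  constructor
  · rintro rfl; rw [sig_sig hn]
  · rintro rfl; rw [sig_sig hn]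

end Stmt17Aux

namespace Stmt17Aux

def i0 (n : ℕ) : Fin (n+2) := ⟨0, by omega⟩
def i1 (n : ℕ) : Fin (n+2) := ⟨1, by omega⟩
def iN (n : ℕ) : Fin (n+2) := ⟨n, by omega⟩
def iT (n : ℕ) : Fin (n+2) := ⟨n+1, by omega⟩

variable {n : ℕ} {u : Matrix (Fin (n+2)) (Fin (n+2)) ℂ}

section
variable (hn : 2 ≤ n)
  (hUT : ∀ i j : Fin (n+2), (j:ℕ) ≤ (i:ℕ) → u i j = 0)
  (hskew : u.conjTranspose * Jmat n + Jmat n * u = 0)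
  (hy : yV n u = 0)

include hn hskew in
lemma rel (i j : Fin (n+2)) :
    u (sig n i) j = -(starRingEnd ℂ) (u (sig n j) i) := by
  have h0 : (u.conjTranspose * Jmat n + Jmat n * u) i j = 0 := by rw [hskew]; rfl
  rw [Matrix.add_apply, Matrix.mul_apply, Matrix.mul_apply] at h0
  simp only [Matrix.conjTranspose_apply] at h0
  have e1 : ∀ k, star (u k i) * Jmat n k j
      = if k = sig n j then star (u k i) else 0 := by
    intro k; rw [Jmat_eq' hn]; split_ifs <;> simp
  have e2 : ∀ k, Jmat n i k * u k j
      = if k = sig n i then u k j else 0 := by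
    intro k; rw [Jmat_eq hn]; split_ifs <;> simp
  rw [Finset.sum_congr rfl (fun k _ => e1 k), Finset.sum_congr rfl (fun k _ => e2 k),
    Finset.sum_ite_eq', Finset.sum_ite_eq'] at h0
  simp only [Finset.mem_univ, if_true] at h0
  rw [← Complex.star_def]
  linear_combination h0

include hn hskew in
lemma rel2 (a b : Fin (n+2)) :
    u a b = -(starRingEnd ℂ) (u (sig n b) (sig n a)) := by
  have := rel hn hskew (sig n a) b
  rwa [sig_sig hn] at this

include hy in
lemma yzero {j : Fin (n+2)} (h2 : 2 ≤ (j:ℕ)) (hj : (j:ℕ) ≤ n-1) :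
    u (i1 n) j = 0 := by
  have := congrFun hy j
  simp only [yV, Pi.zero_apply] at this
  rw [if_pos ⟨h2, by omega⟩] at this
  exact this

end
end Stmt17Aux

namespace Stmt17Aux
variable {n : ℕ} {u : Matrix (Fin (n+2)) (Fin (n+2)) ℂ}

lemma sig_i0 (hn : 2 ≤ n) : sig n (i0 n) = iT n := by
  apply Fin.ext; rw [sig_val hn]; simp only [i0, iT]; split_ifs <;> first | omega | exact False.elim (by assumption)
lemma sig_i1 (hn : 2 ≤ n) : sig n (i1 n) = iN n := by
  apply Fin.ext; rw [sig_val hn]; simp only [i1, iN]; split_ifs <;> first | omega | exact False.elim (by assumption)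
lemma sig_iN (hn : 2 ≤ n) : sig n (iN n) = i1 n := by
  apply Fin.ext; rw [sig_val hn]; simp only [iN, i1]; split_ifs <;> first | omega | exact False.elim (by assumption)
lemma sig_iT (hn : 2 ≤ n) : sig n (iT n) = i0 n := by
  apply Fin.ext; rw [sig_val hn]; simp only [iT, i0]; split_ifs <;> first | omega | exact False.elim (by assumption)
lemma sig_mid (hn : 2 ≤ n) {j : Fin (n+2)} (h2 : 2 ≤ (j:ℕ)) (hj : (j:ℕ) ≤ n-1) :
    sig n j = j := by
  apply Fin.ext; rw [sig_val hn]; split_ifs <;> first | omega | exact False.elim (by assumption)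

section
variable (hn : 2 ≤ n)
  (hUT : ∀ i j : Fin (n+2), (j:ℕ) ≤ (i:ℕ) → u i j = 0)
  (hskew : u.conjTranspose * Jmat n + Jmat n * u = 0)
  (hy : yV n u = 0)

include hn hUT hskew hy

/-- rows 1..: all columns ≤ n-1 vanish -/
lemma Z4 {k b : Fin (n+2)} (hk : 1 ≤ (k:ℕ)) (hb : (b:ℕ) ≤ n-1) : u k b = 0 := by
  rcases le_or_gt (b:ℕ) (k:ℕ) with h | h
  · exact hUT _ _ h
  · -- 1 ≤ k < b ≤ n-1
    rcases Nat.lt_or_ge (k:ℕ) 2 with hk2 | hk2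
    · have hk1 : (k:ℕ) = 1 := by omega
      have : k = i1 n := Fin.ext (by simpa [i1] using hk1)
      subst this
      exact yzero hy (by omega) hb
    · rw [rel2 hn hskew, sig_mid hn (by omega) hb, sig_mid hn hk2 (by omega)]
      rw [hUT b k (by omega)]
      simp

/-- rows 2..: column n vanishes -/
lemma Z5 {k : Fin (n+2)} (hk : 2 ≤ (k:ℕ)) : u k (iN n) = 0 := by
  rcases le_or_gt (n:ℕ) (k:ℕ) with h | h
  · exact hUT _ _ (by simp [iN]; omega)
  · rw [rel2 hn hskew, sig_iN hn, sig_mid hn hk (by omega)]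
    rw [yzero hy hk (by omega)]
    simp

lemma Ztop (b : Fin (n+2)) : u (iT n) b = 0 := hUT _ _ (by simp [iT]; omega)

lemma V1 : u (iN n) (iT n) = -(starRingEnd ℂ) (u (i0 n) (i1 n)) := by
  rw [rel2 hn hskew, sig_iT hn, sig_iN hn]

lemma V2 : u (i1 n) (iT n) = -(starRingEnd ℂ) (u (i0 n) (iN n)) := by
  rw [rel2 hn hskew, sig_iT hn, sig_i1 hn]

end
end Stmt17Aux

namespace Stmt17Aux
variable {n : ℕ} {u : Matrix (Fin (n+2)) (Fin (n+2)) ℂ}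

section
variable (hn : 2 ≤ n)
  (hUT : ∀ i j : Fin (n+2), (j:ℕ) ≤ (i:ℕ) → u i j = 0)
  (hskew : u.conjTranspose * Jmat n + Jmat n * u = 0)
  (hy : yV n u = 0)

include hn hUT hskew hy

lemma U2supp {a b : Fin (n+2)}
    (h : ¬((a = i0 n ∧ (b = iN n ∨ b = iT n)) ∨ (a = i1 n ∧ b = iT n))) :
    (u * u) a b = 0 := by
  rw [Matrix.mul_apply]
  apply Finset.sum_eq_zero
  intro k _
  have hkl := k.isLt
  have hal := a.isLt
  have hbl := b.isLt
  rcases Nat.lt_or_ge 1 (a:ℕ) with ha2 | ha2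
  · -- 2 ≤ a : show u a k = 0 or u k b = 0
    by_cases hk1 : (k:ℕ) ≤ n-1
    · rw [Z4 hn hUT hskew hy (by omega) hk1]; ring
    · by_cases hk2 : (k:ℕ) = n
      · have : k = iN n := Fin.ext (by simpa [iN] using hk2)
        subst this
        rw [Z5 hn hUT hskew hy (by omega)]; ring
      · have : k = iT n := Fin.ext (by simp [iT]; omega)
        subst this
        rw [Ztop hn hUT hskew hy b]; ring
  · rcases Nat.lt_or_ge 0 (a:ℕ) with ha1 | ha1
    · -- a = 1, b ≠ iT
      have ha : a = i1 n := Fin.ext (by simp [i1]; omega)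
      have hb : ¬ b = iT n := by rintro rfl; exact h (Or.inr ⟨ha, rfl⟩)
      have hbn : (b:ℕ) ≤ n := by
        rcases Nat.lt_or_ge (b:ℕ) (n+1) with h' | h'
        · omega
        · exact absurd (Fin.ext (by simp [iT]; omega) : b = iT n) hb
      subst ha
      by_cases hk1 : (k:ℕ) ≤ n-1
      · rw [Z4 hn hUT hskew hy (by simp [i1]) hk1]; ring
      · -- k = iN or iT; u k b = 0 since b ≤ n
        by_cases hk2 : (k:ℕ) = n
        · rw [hUT k b (by omega)]; ring
        · have : k = iT n := Fin.ext (by simp [iT]; omega)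
          subst this
          rw [Ztop hn hUT hskew hy b]; ring
    · -- a = 0, b ≤ n-1
      have ha : a = i0 n := Fin.ext (by show (a:ℕ) = 0; omega)
      have hbn : (b:ℕ) ≤ n-1 := by
        by_contra hb'
        by_cases hb2 : (b:ℕ) = n
        · exact h (Or.inl ⟨ha, Or.inl (Fin.ext (by simp [iN]; omega))⟩)
        · exact h (Or.inl ⟨ha, Or.inr (Fin.ext (by simp [iT]; omega))⟩)
      by_cases hk0 : (k:ℕ) = 0
      · rw [hUT a k (by omega)]; ring
      · rw [Z4 hn hUT hskew hy (by omega) hbn]; ring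

lemma U2val1 : (u * u) (i1 n) (iT n) = u (i1 n) (iN n) * u (iN n) (iT n) := by
  rw [Matrix.mul_apply]
  rw [Finset.sum_eq_single (iN n)]
  · intro k _ hk
    have hkl := k.isLt
    by_cases hk1 : (k:ℕ) ≤ n-1
    · rw [Z4 hn hUT hskew hy (by simp [i1]) hk1]; ring
    · have : k = iT n := Fin.ext (by
        simp only [iT]
        have : ¬ (k:ℕ) = n := fun h => hk (Fin.ext (by simpa [iN] using h))
        omega)
      subst this
      rw [Ztop hn hUT hskew hy]; ring
  · intro h; exact absurd (Finset.mem_univ _) h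

lemma U2val0 : (u * u) (i0 n) (iN n) = u (i0 n) (i1 n) * u (i1 n) (iN n) := by
  rw [Matrix.mul_apply]
  rw [Finset.sum_eq_single (i1 n)]
  · intro k _ hk
    have hkl := k.isLt
    by_cases hk0 : (k:ℕ) = 0
    · rw [hUT (i0 n) k (by show (k:ℕ) ≤ 0; omega)]; ring
    · have hk1 : ¬ (k:ℕ) = 1 := fun h => hk (Fin.ext (by simpa [i1] using h))
      rw [Z5 hn hUT hskew hy (by omega)]; ring
  · intro h; exact absurd (Finset.mem_univ _) h

lemma U3supp {a b : Fin (n+2)} (h : ¬(a = i0 n ∧ b = iT n)) :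
    (u * u * u) a b = 0 := by
  rw [Matrix.mul_apply]
  apply Finset.sum_eq_zero
  intro k _
  have hkl := k.isLt
  by_cases hk : k = iT n
  · subst hk; rw [Ztop hn hUT hskew hy]; ring
  · -- (u*u) a k = 0 unless (a,k) special; and if (a,k) = (i0,iN) then u iN b... 
    by_cases hak : a = i0 n ∧ k = iN n
    · obtain ⟨ha, hk'⟩ := hak
      subst ha; subst hk'
      have hb : ¬ b = iT n := fun hb => h ⟨rfl, hb⟩
      rw [hUT (iN n) b ?_]; ring
      have hbl := b.isLt
      have : ¬ (b:ℕ) = n+1 := fun h' => hb (Fin.ext (by simpa [iT] using h'))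
      simp [iN]; omega
    · rw [U2supp hn hUT hskew hy ?_]; ring
      rintro (⟨ha, hb | hb⟩ | ⟨ha, hb⟩)
      · exact hak ⟨ha, hb⟩
      · exact hk hb
      · exact hk hb

lemma U3val : (u * u * u) (i0 n) (iT n)
    = u (i0 n) (i1 n) * u (i1 n) (iN n) * u (iN n) (iT n) := by
  rw [Matrix.mul_apply]
  rw [Finset.sum_eq_single (iN n)]
  · rw [U2val0 hn hUT hskew hy]
  · intro k _ hk
    by_cases hk2 : k = iT n
    · subst hk2; rw [Ztop hn hUT hskew hy]; ring
    · rw [U2supp hn hUT hskew hy ?_]; ring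
      rintro (⟨ha, hb | hb⟩ | ⟨ha, hb⟩)
      · exact hk hb
      · exact hk2 hb
      · exact absurd ha (by simp [i0, i1, Fin.ext_iff])
  · intro h; exact absurd (Finset.mem_univ _) h

lemma U4 : u * u * u * u = 0 := by
  ext a b
  rw [Matrix.mul_apply, Matrix.zero_apply]
  apply Finset.sum_eq_zero
  intro k _
  by_cases hk : k = iT n
  · subst hk; rw [Ztop hn hUT hskew hy]; ring
  · rw [U3supp hn hUT hskew hy (fun h => hk h.2)]; ring

lemma Upow (k : ℕ) (hk : 4 ≤ k) : u ^ k = 0 := by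
  have h4 : u ^ 4 = u * u * u * u := by
    rw [pow_succ, pow_succ, pow_succ, pow_one]
  calc u ^ k = u ^ 4 * u ^ (k - 4) := by rw [← pow_add]; congr 1; omega
  _ = 0 := by rw [h4, U4 hn hUT hskew hy, zero_mul]

end
end Stmt17Aux

namespace Stmt17Aux
variable {n : ℕ} {u : Matrix (Fin (n+2)) (Fin (n+2)) ℂ}

section
variable (hn : 2 ≤ n)
  (hUT : ∀ i j : Fin (n+2), (j:ℕ) ≤ (i:ℕ) → u i j = 0)
  (hskew : u.conjTranspose * Jmat n + Jmat n * u = 0)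
  (hy : yV n u = 0)

include hn hUT hskew hy

lemma exp_apply (t : ℝ) (a b : Fin (n+2)) :
    NormedSpace.exp (t • u) a b = (if a = b then 1 else 0) + (t:ℂ) * u a b
      + (t:ℂ)^2/2 * (u*u) a b + (t:ℂ)^3/6 * (u*u*u) a b := by
  have hsum : NormedSpace.exp (t • u)
      = ∑ k ∈ Finset.range 4, (k.factorial : ℂ)⁻¹ • (t • u)^k := by
    rw [NormedSpace.exp_eq_tsum (𝕂 := ℂ)]
    exact tsum_eq_sum (fun k hk => by
      rw [smul_pow, Upow hn hUT hskew hy k (by simpa using hk), smul_zero, smul_zero])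
  have e0 : (t • u)^0 = (1 : Matrix (Fin (n+2)) (Fin (n+2)) ℂ) := pow_zero _
  have e1 : (t • u)^1 = t • u := pow_one _
  have e2 : (t • u)^2 = (t^2) • (u*u) := by rw [smul_pow, show u^2 = u*u from pow_two u]
  have e3 : (t • u)^3 = (t^3) • (u*u*u) := by
    rw [smul_pow, show u^3 = u*u*u from by rw [pow_succ, pow_two]]
  rw [hsum, Finset.sum_range_succ, Finset.sum_range_succ, Finset.sum_range_succ,
    Finset.sum_range_one, e0, e1, e2, e3]
  simp only [Matrix.add_apply, Matrix.smul_apply, Matrix.one_apply, smul_eq_mul,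
    Complex.real_smul]
  norm_num [Nat.factorial]
  push_cast
  ring

end
end Stmt17Aux

namespace Stmt17Aux

def Complex.abs : AbsoluteValue ℂ ℝ where
  toFun z := ‖z‖
  map_mul' := norm_mul
  nonneg' := norm_nonneg
  eq_zero' _ := norm_eq_zero
  add_le' := norm_add_le

lemma Complex.abs_ofReal (r : ℝ) : Complex.abs (r : ℂ) = |r| :=
  show ‖(r:ℂ)‖ = |r| by simp

lemma Complex.abs_two : Complex.abs (2 : ℂ) = 2 :=
  show ‖(2:ℂ)‖ = 2 by simp

lemma Complex.norm_eq_abs (z : ℂ) : ‖z‖ = Complex.abs z := rfl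

lemma one_le_X3 (x : ℝ) (hx : 0 ≤ x) : (1:ℝ) ≤ (1+x)^3 := by
  have e : (1+x)^3 = 1 + 3*x + 3*x^2 + x^3 := by ring
  rw [e]; linarith [pow_nonneg hx 2, pow_nonneg hx 3]
lemma x_le_X3 (x : ℝ) (hx : 0 ≤ x) : x ≤ (1+x)^3 := by
  have e : (1+x)^3 = 1 + 3*x + 3*x^2 + x^3 := by ring
  rw [e]; linarith [pow_nonneg hx 2, pow_nonneg hx 3]
lemma x2_le_X3 (x : ℝ) (hx : 0 ≤ x) : x^2 ≤ (1+x)^3 := by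
  have e : (1+x)^3 = 1 + 3*x + 3*x^2 + x^3 := by ring
  rw [e]; linarith [pow_nonneg hx 2, pow_nonneg hx 3]
lemma x3_le_X3 (x : ℝ) (hx : 0 ≤ x) : x^3 ≤ (1+x)^3 := by
  have e : (1+x)^3 = 1 + 3*x + 3*x^2 + x^3 := by ring
  rw [e]; linarith [pow_nonneg hx 2, pow_nonneg hx 3]
lemma one_le_X2 (x : ℝ) (hx : 0 ≤ x) : (1:ℝ) ≤ (1+x)^2 := by
  have e : (1+x)^2 = 1 + 2*x + x^2 := by ring
  rw [e]; linarith [pow_nonneg hx 2]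
lemma x_le_X2 (x : ℝ) (hx : 0 ≤ x) : x ≤ (1+x)^2 := by
  have e : (1+x)^2 = 1 + 2*x + x^2 := by ring
  rw [e]; linarith [pow_nonneg hx 2]
lemma x2_le_X2 (x : ℝ) (hx : 0 ≤ x) : x^2 ≤ (1+x)^2 := by
  have e : (1+x)^2 = 1 + 2*x + x^2 := by ring
  rw [e]; linarith [pow_nonneg hx 2]

lemma habs_t1 (t : ℝ) (d : ℂ) : Complex.abs ((t:ℂ) * d) = |t| * Complex.abs d := by
  rw [map_mul, Complex.abs_ofReal]

lemma habs_t2 (t : ℝ) (d : ℂ) : Complex.abs ((t:ℂ)^2/2 * d) ≤ |t|^2 * Complex.abs d := by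
  rw [map_mul, map_div₀, map_pow, Complex.abs_ofReal, Complex.abs_two]
  have h1 : |t|^2/2 ≤ |t|^2 := half_le_self (by positivity)
  exact mul_le_mul_of_nonneg_right h1 (AbsoluteValue.nonneg _ _)

lemma habs_t3 (t : ℝ) (d : ℂ) : Complex.abs ((t:ℂ)^3/6 * d) ≤ |t|^3 * Complex.abs d := by
  rw [map_mul, map_div₀, map_pow, Complex.abs_ofReal]
  have h6 : Complex.abs (6:ℂ) = 6 := by
    rw [show ((6:ℂ)) = ((6:ℝ):ℂ) by norm_num, Complex.abs_ofReal]; norm_num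
  rw [h6]
  have h1 : |t|^3/6 ≤ |t|^3 := by
    have : (0:ℝ) ≤ |t|^3 := by positivity
    linarith
  exact mul_le_mul_of_nonneg_right h1 (AbsoluteValue.nonneg _ _)

lemma pabs_tri (δ a b c : ℂ) : Complex.abs (δ + a + b + c)
    ≤ Complex.abs δ + Complex.abs a + Complex.abs b + Complex.abs c := by
  calc Complex.abs (δ + a + b + c) ≤ Complex.abs (δ + a + b) + Complex.abs c :=
        Complex.abs.add_le _ _
    _ ≤ (Complex.abs (δ + a) + Complex.abs b) + Complex.abs c := by
        have := Complex.abs.add_le (δ + a) b; linarith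
    _ ≤ _ := by have := Complex.abs.add_le δ a; linarith

lemma pabs3 (δ d1 d2 d3 : ℂ) (hδ : Complex.abs δ ≤ 1) (t : ℝ) :
    Complex.abs (δ + (t:ℂ) * d1 + (t:ℂ)^2/2 * d2 + (t:ℂ)^3/6 * d3)
      ≤ (1 + Complex.abs d1 + Complex.abs d2 + Complex.abs d3) * (1+|t|)^3 := by
  have hx : 0 ≤ |t| := abs_nonneg t
  have hA1 : 0 ≤ Complex.abs d1 := AbsoluteValue.nonneg _ _
  have hA2 : 0 ≤ Complex.abs d2 := AbsoluteValue.nonneg _ _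
  have hA3 : 0 ≤ Complex.abs d3 := AbsoluteValue.nonneg _ _
  have tri := pabs_tri δ ((t:ℂ)*d1) ((t:ℂ)^2/2*d2) ((t:ℂ)^3/6*d3)
  have t1 := habs_t1 t d1
  have t2 := habs_t2 t d2
  have t3 := habs_t3 t d3
  have c1 : Complex.abs d1 * |t| ≤ Complex.abs d1 * (1+|t|)^3 :=
    mul_le_mul_of_nonneg_left (x_le_X3 _ hx) hA1
  have c2 : Complex.abs d2 * |t|^2 ≤ Complex.abs d2 * (1+|t|)^3 :=
    mul_le_mul_of_nonneg_left (x2_le_X3 _ hx) hA2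
  have c3 : Complex.abs d3 * |t|^3 ≤ Complex.abs d3 * (1+|t|)^3 :=
    mul_le_mul_of_nonneg_left (x3_le_X3 _ hx) hA3
  have o1 := one_le_X3 _ hx
  nlinarith [tri, t1, t2, t3]

lemma pabs2 (δ d1 d2 d3 : ℂ) (hδ : Complex.abs δ ≤ 1) (t : ℝ) :
    Complex.abs (δ + (t:ℂ) * d1 + (t:ℂ)^2/2 * d2)
      ≤ (1 + Complex.abs d1 + Complex.abs d2 + Complex.abs d3) * (1+|t|)^2 := by
  have hx : 0 ≤ |t| := abs_nonneg t
  have hA1 : 0 ≤ Complex.abs d1 := AbsoluteValue.nonneg _ _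
  have hA2 : 0 ≤ Complex.abs d2 := AbsoluteValue.nonneg _ _
  have hA3 : 0 ≤ Complex.abs d3 := AbsoluteValue.nonneg _ _
  have tri : Complex.abs (δ + (t:ℂ)*d1 + (t:ℂ)^2/2*d2)
      ≤ Complex.abs δ + Complex.abs ((t:ℂ)*d1) + Complex.abs ((t:ℂ)^2/2*d2) := by
    calc Complex.abs (δ + (t:ℂ)*d1 + (t:ℂ)^2/2*d2)
        ≤ Complex.abs (δ + (t:ℂ)*d1) + Complex.abs ((t:ℂ)^2/2*d2) := Complex.abs.add_le _ _
      _ ≤ _ := by have := Complex.abs.add_le δ ((t:ℂ)*d1); linarith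
  have t1 := habs_t1 t d1
  have t2 := habs_t2 t d2
  have c1 : Complex.abs d1 * |t| ≤ Complex.abs d1 * (1+|t|)^2 :=
    mul_le_mul_of_nonneg_left (x_le_X2 _ hx) hA1
  have c2 : Complex.abs d2 * |t|^2 ≤ Complex.abs d2 * (1+|t|)^2 :=
    mul_le_mul_of_nonneg_left (x2_le_X2 _ hx) hA2
  have o1 := one_le_X2 _ hx
  nlinarith [tri, t1, t2]

lemma pabs1 (δ d1 d2 d3 : ℂ) (hδ : Complex.abs δ ≤ 1) (t : ℝ) :
    Complex.abs (δ + (t:ℂ) * d1)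
      ≤ (1 + Complex.abs d1 + Complex.abs d2 + Complex.abs d3) * (1+|t|) := by
  have hx : 0 ≤ |t| := abs_nonneg t
  have hA1 : 0 ≤ Complex.abs d1 := AbsoluteValue.nonneg _ _
  have hA2 : 0 ≤ Complex.abs d2 := AbsoluteValue.nonneg _ _
  have hA3 : 0 ≤ Complex.abs d3 := AbsoluteValue.nonneg _ _
  have tri := Complex.abs.add_le δ ((t:ℂ)*d1)
  have t1 := habs_t1 t d1
  nlinarith [tri, t1, mul_le_mul_of_nonneg_left hx hA1]

lemma keyLower (m : ℕ) (hm : 1 ≤ m) (a B : ℝ) (ha : 0 < a) (hB : 0 ≤ B) :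
    ∃ k : ℝ, 0 < k ∧ ∀ x : ℝ, 0 ≤ x →
      k * (1+x)^m ≤ max 1 (a * x^m - B * (1+x)^(m-1)) := by
  set R : ℝ := max 1 (2^(m+1) * B / a) with hR
  have hR1 : (1:ℝ) ≤ R := le_max_left _ _
  have hRpos : (0:ℝ) < 1 + R := by linarith
  refine ⟨min (a/2^(m+1)) ((1+R)^m)⁻¹, lt_min (by positivity) (inv_pos.mpr (pow_pos hRpos m)), ?_⟩
  intro x hx
  rcases le_total x R with hxR | hRx
  · refine le_trans ?_ (le_max_left _ _)
    have h1 : (1+x)^m ≤ (1+R)^m := pow_le_pow_left₀ (by linarith) (by linarith) m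
    calc min (a/2^(m+1)) ((1+R)^m)⁻¹ * (1+x)^m ≤ ((1+R)^m)⁻¹ * (1+R)^m := by
          apply mul_le_mul (min_le_right _ _) h1 (by positivity) (by positivity)
      _ = 1 := inv_mul_cancel₀ (ne_of_gt (pow_pos hRpos m))
  · refine le_trans ?_ (le_max_right _ _)
    have hx1 : (1:ℝ) ≤ x := le_trans hR1 hRx
    have h2 : (1+x)^m ≤ 2^m * x^m := by
      calc (1+x)^m ≤ (2*x)^m := pow_le_pow_left₀ (by linarith) (by linarith) m
        _ = 2^m * x^m := mul_pow 2 x m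
    have hBle : B * (1+x)^(m-1) ≤ a/2^(m+1) * (1+x)^m := by
      have hxB : 2^(m+1) * B / a ≤ x := le_trans (le_max_right _ _) hRx
      have hB2 : B ≤ a * x / 2^(m+1) := by
        rw [div_le_iff₀ ha] at hxB
        rw [le_div_iff₀ (by positivity : (0:ℝ) < 2^(m+1))]
        linarith
      have hsplit : (1+x)^m = (1+x) * (1+x)^(m-1) := by
        rw [← pow_succ']
        congr 1
        omega
      rw [hsplit]
      calc B * (1+x)^(m-1) ≤ (a * x / 2^(m+1)) * (1+x)^(m-1) :=
            mul_le_mul_of_nonneg_right hB2 (by positivity)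
        _ ≤ (a * (1+x) / 2^(m+1)) * (1+x)^(m-1) := by
            have hxx : x ≤ 1 + x := by linarith
            gcongr
        _ = a/2^(m+1) * ((1+x) * (1+x)^(m-1)) := by ring
    have A2 : a/2^(m+1) * (1+x)^m + a/2^(m+1) * (1+x)^m = a/2^m * (1+x)^m := by
      rw [pow_succ]
      field_simp
      ring
    have A3 : a/2^m * (1+x)^m ≤ a * x^m := by
      have h := mul_le_mul_of_nonneg_left h2 (le_of_lt (by positivity : (0:ℝ) < a/2^m))
      calc a/2^m*(1+x)^m ≤ a/2^m*(2^m*x^m) := h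
        _ = a * x^m := by field_simp
    calc min (a/2^(m+1)) ((1+R)^m)⁻¹ * (1+x)^m ≤ a/2^(m+1) * (1+x)^m :=
          mul_le_mul_of_nonneg_right (min_le_left _ _) (by positivity)
      _ ≤ a * x^m - B * (1+x)^(m-1) := by linarith

end Stmt17Aux

namespace Stmt17Aux

lemma abs_six : Complex.abs (6:ℂ) = 6 := by
  rw [show ((6:ℂ)) = ((6:ℝ):ℂ) by norm_num, Complex.abs_ofReal]; norm_num

lemma cube_rpow (y : ℝ) (hy : 0 ≤ y) : (y^3) ^ ((4:ℝ)/3) = y^4 := by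
  rw [← Real.rpow_natCast y 3, ← Real.rpow_mul hy]
  have h : ((3:ℕ):ℝ) * ((4:ℝ)/3) = ((4:ℕ):ℝ) := by norm_num
  rw [h, Real.rpow_natCast]

end Stmt17Aux

namespace Stmt17Aux

lemma abs_sub_le' (X Y : ℂ) : Complex.abs (X - Y) ≤ Complex.abs X + Complex.abs Y := by
  simpa [Complex.norm_eq_abs] using norm_sub_le X Y

end Stmt17Aux

namespace Stmt17Aux

set_option maxHeartbeats 1600000 in
theorem main_aux {n : ℕ} (hn : 2 ≤ n) {u : Matrix (Fin (n+2)) (Fin (n+2)) ℂ}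
    (hUT : ∀ i j : Fin (n+2), (j:ℕ) ≤ (i:ℕ) → u i j = 0)
    (hskew : u.conjTranspose * Jmat n + Jmat n * u = 0)
    (hy : yV n u = 0)
    (hphi : u (i0 n) (i1 n) ≠ 0) (hs : u (i1 n) (iN n) ≠ 0) :
    ∃ c C : ℝ, 0 < c ∧ 0 < C ∧ ∀ t : ℝ,
      c * entryNorm n (NormedSpace.exp (t • u)) ^ ((4:ℝ)/3)
          ≤ rhoNorm n (NormedSpace.exp (t • u)) ∧
      rhoNorm n (NormedSpace.exp (t • u))
          ≤ C * entryNorm n (NormedSpace.exp (t • u)) ^ ((4:ℝ)/3) := by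
  have ne01 : i0 n ≠ i1 n := by simp [i0, i1, Fin.ext_iff]
  have ne0N : i0 n ≠ iN n := by simp [i0, iN, Fin.ext_iff]; omega
  have ne0T : i0 n ≠ iT n := by simp [i0, iT, Fin.ext_iff]
  have ne1N : i1 n ≠ iN n := by simp [i1, iN, Fin.ext_iff]; omega
  have ne1T : i1 n ≠ iT n := by simp [i1, iT, Fin.ext_iff]; omega
  have neNT : iN n ≠ iT n := by simp [iN, iT, Fin.ext_iff]
  set φ := u (i0 n) (i1 n) with hφdef
  set s := u (i1 n) (iN n) with hsdef
  set η := u (i0 n) (iN n) with hηdef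
  set χ := u (i0 n) (iT n) with hχdef
  set w := (u*u) (i0 n) (iT n) with hwdef
  set E : ℝ → Matrix (Fin (n+2)) (Fin (n+2)) ℂ := fun t => NormedSpace.exp (t • u)
    with hEdef
  have hEa : ∀ (t : ℝ) a b, E t a b = (if a = b then 1 else 0) + (t:ℂ) * u a b
      + (t:ℂ)^2/2 * (u*u) a b + (t:ℂ)^3/6 * (u*u*u) a b := by
    intro t a b
    exact exp_apply hn hUT hskew hy t a b
  -- entry values
  have hE00 : ∀ t, E t (i0 n) (i0 n) = 1 := by
    intro t
    rw [hEa, if_pos rfl, hUT _ _ (le_refl _),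
      U2supp hn hUT hskew hy (by tauto), U3supp hn hUT hskew hy (by tauto)]
    ring
  have hE11 : ∀ t, E t (i1 n) (i1 n) = 1 := by
    intro t
    rw [hEa, if_pos rfl, hUT _ _ (le_refl _),
      U2supp hn hUT hskew hy ?_, U3supp hn hUT hskew hy ?_]
    · ring
    · rintro ⟨h1, -⟩; exact ne01 h1.symm
    · rintro (⟨h1, -⟩ | ⟨-, h2⟩)
      · exact ne01 h1.symm
      · exact ne1T h2
  have hE10 : ∀ t, E t (i1 n) (i0 n) = 0 := by
    intro t
    rw [hEa, if_neg (fun h => ne01 h.symm), hUT _ _ (by simp [i0]),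
      U2supp hn hUT hskew hy (by
        rintro (⟨h1, -⟩ | ⟨-, h2⟩)
        · exact ne01 h1.symm
        · exact ne0T h2),
      U3supp hn hUT hskew hy (by rintro ⟨h1, -⟩; exact ne01 h1.symm)]
    ring
  have hE0N : ∀ t, E t (i0 n) (iN n) = (t:ℂ) * η + (t:ℂ)^2/2 * (φ * s) := by
    intro t
    rw [hEa, if_neg ne0N, U2val0 hn hUT hskew hy,
      U3supp hn hUT hskew hy (by rintro ⟨-, h2⟩; exact neNT h2)]
    rw [← hηdef, ← hφdef, ← hsdef]
    ring
  have hE1T : ∀ t, E t (i1 n) (iT n)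
      = (t:ℂ) * (-(starRingEnd ℂ) η) + (t:ℂ)^2/2 * (s * (-(starRingEnd ℂ) φ)) := by
    intro t
    rw [hEa, if_neg ne1T, U2val1 hn hUT hskew hy,
      U3supp hn hUT hskew hy (by rintro ⟨h1, -⟩; exact ne01 h1.symm),
      V1 hn hUT hskew hy, V2 hn hUT hskew hy]
    rw [← hηdef, ← hφdef, ← hsdef]
    ring
  have hE0T : ∀ t, E t (i0 n) (iT n) = (t:ℂ) * χ + (t:ℂ)^2/2 * w
      + (t:ℂ)^3/6 * (φ * s * (-(starRingEnd ℂ) φ)) := by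
    intro t
    rw [hEa, if_neg ne0T, U3val hn hUT hskew hy, V1 hn hUT hskew hy]
    rw [← hχdef, ← hwdef, ← hφdef, ← hsdef]
    ring
  have hE1N : ∀ t, E t (i1 n) (iN n) = (t:ℂ) * s := by
    intro t
    rw [hEa, if_neg ne1N,
      U2supp hn hUT hskew hy ?_, U3supp hn hUT hskew hy ?_]
    · rw [← hsdef]; ring
    · rintro ⟨h1, -⟩; exact ne01 h1.symm
    · rintro (⟨h1, -⟩ | ⟨-, h2⟩)
      · exact ne01 h1.symm
      · exact neNT h2
  -- uniform entry bounds
  set P := entryNorm n u with hPdef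
  set P2 := entryNorm n (u*u) with hP2def
  set P3 := entryNorm n (u*u*u) with hP3def
  have hPle : ∀ a b, Complex.abs (u a b) ≤ P := fun a b =>
    Finset.le_sup' (fun p : Fin (n+2) × Fin (n+2) => Complex.abs (u p.1 p.2))
      (Finset.mem_univ (a, b))
  have hP2le : ∀ a b, Complex.abs ((u*u) a b) ≤ P2 := fun a b =>
    Finset.le_sup' (fun p : Fin (n+2) × Fin (n+2) => Complex.abs ((u*u) p.1 p.2))
      (Finset.mem_univ (a, b))
  have hP3le : ∀ a b, Complex.abs ((u*u*u) a b) ≤ P3 := fun a b =>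
    Finset.le_sup' (fun p : Fin (n+2) × Fin (n+2) => Complex.abs ((u*u*u) p.1 p.2))
      (Finset.mem_univ (a, b))
  set K := 1 + P + P2 + P3 with hKdef
  have hKge : ∀ a b, 1 + Complex.abs (u a b) + Complex.abs ((u*u) a b)
      + Complex.abs ((u*u*u) a b) ≤ K := by
    intro a b
    have := hPle a b; have := hP2le a b; have := hP3le a b
    rw [hKdef]; linarith
  have hKpos : (0:ℝ) < K := by
    have h1 := le_trans (AbsoluteValue.nonneg _ _) (hPle (i0 n) (i0 n))
    have h2 := le_trans (AbsoluteValue.nonneg _ _) (hP2le (i0 n) (i0 n))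
    have h3 := le_trans (AbsoluteValue.nonneg _ _) (hP3le (i0 n) (i0 n))
    rw [hKdef]; linarith
  have hδle : ∀ (a b : Fin (n+2)), Complex.abs ((if a = b then (1:ℂ) else 0)) ≤ 1 := by
    intro a b; split_ifs <;> simp
  have bnd3 : ∀ (t:ℝ) a b, Complex.abs (E t a b) ≤ K * (1+|t|)^3 := by
    intro t a b
    rw [hEa]
    exact le_trans (pabs3 _ _ _ _ (hδle a b) t)
      (mul_le_mul_of_nonneg_right (hKge a b) (by positivity))
  have bnd2 : ∀ (t:ℝ) a b, ¬(a = i0 n ∧ b = iT n) →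
      Complex.abs (E t a b) ≤ K * (1+|t|)^2 := by
    intro t a b h
    rw [hEa, U3supp hn hUT hskew hy h]
    have heq : (if a = b then (1:ℂ) else 0) + (t:ℂ) * u a b + (t:ℂ)^2/2 * (u*u) a b
        + (t:ℂ)^3/6 * 0 = (if a = b then (1:ℂ) else 0) + (t:ℂ) * u a b
        + (t:ℂ)^2/2 * (u*u) a b := by ring
    rw [heq]
    exact le_trans (pabs2 _ _ _ ((u*u*u) a b) (hδle a b) t)
      (mul_le_mul_of_nonneg_right (hKge a b) (by positivity))
  have bnd1 : ∀ (t:ℝ) a b,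
      ¬((a = i0 n ∧ (b = iN n ∨ b = iT n)) ∨ (a = i1 n ∧ b = iT n)) →
      Complex.abs (E t a b) ≤ K * (1+|t|) := by
    intro t a b h
    rw [hEa, U3supp hn hUT hskew hy (by rintro ⟨h1, h2⟩; exact h (Or.inl ⟨h1, Or.inr h2⟩)),
      U2supp hn hUT hskew hy h]
    have heq : (if a = b then (1:ℂ) else 0) + (t:ℂ) * u a b + (t:ℂ)^2/2 * 0
        + (t:ℂ)^3/6 * 0 = (if a = b then (1:ℂ) else 0) + (t:ℂ) * u a b := by ring
    rw [heq]
    exact le_trans (pabs1 _ _ ((u*u) a b) ((u*u*u) a b) (hδle a b) t)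
      (mul_le_mul_of_nonneg_right (hKge a b) (by positivity))
  -- entryNorm bounds
  have EN_up : ∀ t:ℝ, entryNorm n (E t) ≤ K * (1+|t|)^3 := by
    intro t
    apply Finset.sup'_le
    rintro ⟨a, b⟩ -
    exact bnd3 t a b
  have EN_ge1 : ∀ t:ℝ, (1:ℝ) ≤ entryNorm n (E t) := by
    intro t
    have h := Finset.le_sup' (fun p : Fin (n+2) × Fin (n+2) => Complex.abs (E t p.1 p.2))
      (Finset.mem_univ ((i0 n, i0 n)))
    simp only [hE00 t, map_one] at h
    exact h
  have EN_geT : ∀ t:ℝ, Complex.abs (E t (i0 n) (iT n)) ≤ entryNorm n (E t) := by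
    intro t
    exact Finset.le_sup' (fun p : Fin (n+2) × Fin (n+2) => Complex.abs (E t p.1 p.2))
      (Finset.mem_univ ((i0 n, iT n)))
  -- rhoNorm lower bounds
  have RN_ge1 : ∀ t:ℝ, (1:ℝ) ≤ rhoNorm n (E t) := by
    intro t
    have h := Finset.le_sup'
      (fun q : (Fin (n+2) × Fin (n+2)) × Fin (n+2) × Fin (n+2) =>
        Complex.abs (E t q.1.1 q.2.1 * E t q.1.2 q.2.2 - E t q.1.1 q.2.2 * E t q.1.2 q.2.1))
      (Finset.mem_univ (((i0 n, i1 n), (i0 n, i1 n))))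
    simp only [hE00 t, hE11 t, hE10 t, one_mul, mul_zero, sub_zero, map_one] at h
    exact h
  have RN_geD : ∀ t:ℝ, Complex.abs (E t (i0 n) (iN n) * E t (i1 n) (iT n)
      - E t (i0 n) (iT n) * E t (i1 n) (iN n)) ≤ rhoNorm n (E t) := by
    intro t
    exact Finset.le_sup'
      (fun q : (Fin (n+2) × Fin (n+2)) × Fin (n+2) × Fin (n+2) =>
        Complex.abs (E t q.1.1 q.2.1 * E t q.1.2 q.2.2 - E t q.1.1 q.2.2 * E t q.1.2 q.2.1))
      (Finset.mem_univ (((i0 n, i1 n), (iN n, iT n))))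
  -- Delta polynomial
  set A2c := -(η * (starRingEnd ℂ) η) - χ * s with hA2def
  set A3c := -(η * (s * (starRingEnd ℂ) φ))/2 - (φ * s * (starRingEnd ℂ) η)/2 - w*s/2
    with hA3def
  set A4c := -(φ * (starRingEnd ℂ) φ * s^2)/12 with hA4def
  have hΔ : ∀ t:ℝ, E t (i0 n) (iN n) * E t (i1 n) (iT n)
      - E t (i0 n) (iT n) * E t (i1 n) (iN n)
      = A2c*(t:ℂ)^2 + A3c*(t:ℂ)^3 + A4c*(t:ℂ)^4 := by
    intro t
    rw [hE0N t, hE1T t, hE0T t, hE1N t, hA2def, hA3def, hA4def]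
    ring
  have hconjφ : (starRingEnd ℂ) φ ≠ 0 := by simpa using hphi
  have hA4ne : A4c ≠ 0 := by
    rw [hA4def]
    have hne : φ * (starRingEnd ℂ) φ * s^2 ≠ 0 :=
      mul_ne_zero (mul_ne_zero hphi hconjφ) (pow_ne_zero 2 hs)
    intro hcon
    apply hne
    field_simp at hcon
    linear_combination -hcon
  set a4 := Complex.abs A4c with ha4def
  have ha4pos : 0 < a4 := by rw [ha4def]; exact AbsoluteValue.pos _ hA4ne
  set B4 := Complex.abs A2c + Complex.abs A3c with hB4def
  have hB4nn : 0 ≤ B4 := by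
    rw [hB4def]
    exact add_nonneg (AbsoluteValue.nonneg _ _) (AbsoluteValue.nonneg _ _)
  have Δlow : ∀ t:ℝ, a4 * |t|^4 - B4 * (1+|t|)^3
      ≤ Complex.abs (E t (i0 n) (iN n) * E t (i1 n) (iT n)
        - E t (i0 n) (iT n) * E t (i1 n) (iN n)) := by
    intro t
    rw [hΔ t]
    have h1 : Complex.abs (A4c * (t:ℂ)^4) = a4 * |t|^4 := by
      rw [map_mul, map_pow, Complex.abs_ofReal, ha4def]
    have h2 : Complex.abs (A2c*(t:ℂ)^2 + A3c*(t:ℂ)^3) ≤ B4 * (1+|t|)^3 := by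
      have q2 := x2_le_X3 |t| (abs_nonneg t)
      have q3 := x3_le_X3 |t| (abs_nonneg t)
      have hA2nn := AbsoluteValue.nonneg Complex.abs A2c
      have hA3nn := AbsoluteValue.nonneg Complex.abs A3c
      calc Complex.abs (A2c*(t:ℂ)^2 + A3c*(t:ℂ)^3)
          ≤ Complex.abs (A2c*(t:ℂ)^2) + Complex.abs (A3c*(t:ℂ)^3) := Complex.abs.add_le _ _
        _ = Complex.abs A2c * |t|^2 + Complex.abs A3c * |t|^3 := by
            rw [map_mul, map_mul, map_pow, map_pow, Complex.abs_ofReal]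
        _ ≤ Complex.abs A2c * (1+|t|)^3 + Complex.abs A3c * (1+|t|)^3 :=
            add_le_add (mul_le_mul_of_nonneg_left q2 hA2nn)
              (mul_le_mul_of_nonneg_left q3 hA3nn)
        _ = B4 * (1+|t|)^3 := by rw [hB4def]; ring
    have heq : A4c*(t:ℂ)^4 = (A2c*(t:ℂ)^2 + A3c*(t:ℂ)^3 + A4c*(t:ℂ)^4)
        - (A2c*(t:ℂ)^2 + A3c*(t:ℂ)^3) := by ring
    have h3 : a4 * |t|^4 ≤ Complex.abs (A2c*(t:ℂ)^2 + A3c*(t:ℂ)^3 + A4c*(t:ℂ)^4)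
        + Complex.abs (A2c*(t:ℂ)^2 + A3c*(t:ℂ)^3) := by
      calc a4*|t|^4 = Complex.abs (A4c*(t:ℂ)^4) := h1.symm
        _ = Complex.abs ((A2c*(t:ℂ)^2 + A3c*(t:ℂ)^3 + A4c*(t:ℂ)^4)
            - (A2c*(t:ℂ)^2 + A3c*(t:ℂ)^3)) := congrArg Complex.abs (by ring)
        _ ≤ _ := abs_sub_le' _ _
    linarith
  -- cubic coefficient of entry (i0, iT)
  set c3 := φ * s * (-(starRingEnd ℂ) φ) with hc3def
  have hc3ne : c3 ≠ 0 := by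
    rw [hc3def]
    exact mul_ne_zero (mul_ne_zero hphi hs) (neg_ne_zero.mpr hconjφ)
  set a3 := Complex.abs c3 / 6 with ha3def
  have ha3pos : 0 < a3 := by
    rw [ha3def]
    have := AbsoluteValue.pos Complex.abs hc3ne
    linarith
  set B3 := Complex.abs χ + Complex.abs w with hB3def
  have hB3nn : 0 ≤ B3 := by
    rw [hB3def]
    exact add_nonneg (AbsoluteValue.nonneg _ _) (AbsoluteValue.nonneg _ _)
  have Tlow : ∀ t:ℝ, a3*|t|^3 - B3*(1+|t|)^2 ≤ Complex.abs (E t (i0 n) (iT n)) := by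
    intro t
    rw [hE0T t]
    have h1 : Complex.abs ((t:ℂ)^3/6 * c3) = a3 * |t|^3 := by
      rw [map_mul, map_div₀, map_pow, Complex.abs_ofReal, abs_six, ha3def]
      ring
    have h2 : Complex.abs ((t:ℂ)*χ + (t:ℂ)^2/2*w) ≤ B3*(1+|t|)^2 := by
      have q1 := x_le_X2 |t| (abs_nonneg t)
      have q2 := x2_le_X2 |t| (abs_nonneg t)
      have hχnn := AbsoluteValue.nonneg Complex.abs χ
      have hwnn := AbsoluteValue.nonneg Complex.abs w
      have e1 := habs_t1 t χ
      have e2 := habs_t2 t w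
      have c1 : Complex.abs χ * |t| ≤ Complex.abs χ * (1+|t|)^2 :=
        mul_le_mul_of_nonneg_left q1 hχnn
      have c2 : Complex.abs w * |t|^2 ≤ Complex.abs w * (1+|t|)^2 :=
        mul_le_mul_of_nonneg_left q2 hwnn
      have tri := Complex.abs.add_le ((t:ℂ)*χ) ((t:ℂ)^2/2*w)
      rw [hB3def]
      nlinarith [tri, e1, e2]
    have heq : (t:ℂ)^3/6*c3 = ((t:ℂ)*χ + (t:ℂ)^2/2*w + (t:ℂ)^3/6*c3)
        - ((t:ℂ)*χ + (t:ℂ)^2/2*w) := by ring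
    have h3 : a3*|t|^3 ≤ Complex.abs ((t:ℂ)*χ + (t:ℂ)^2/2*w + (t:ℂ)^3/6*c3)
        + Complex.abs ((t:ℂ)*χ + (t:ℂ)^2/2*w) := by
      calc a3*|t|^3 = Complex.abs ((t:ℂ)^3/6*c3) := h1.symm
        _ = Complex.abs (((t:ℂ)*χ + (t:ℂ)^2/2*w + (t:ℂ)^3/6*c3)
            - ((t:ℂ)*χ + (t:ℂ)^2/2*w)) := congrArg Complex.abs (by ring)
        _ ≤ _ := abs_sub_le' _ _
    linarith
  obtain ⟨k3, hk3pos, hk3⟩ := keyLower 3 (by norm_num) a3 B3 ha3pos hB3nn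
  obtain ⟨k4, hk4pos, hk4⟩ := keyLower 4 (by norm_num) a4 B4 ha4pos hB4nn
  have EN_low : ∀ t:ℝ, k3 * (1+|t|)^3 ≤ entryNorm n (E t) := by
    intro t
    refine le_trans (hk3 |t| (abs_nonneg t)) (max_le (EN_ge1 t) (le_trans ?_ (EN_geT t)))
    exact Tlow t
  have RN_low : ∀ t:ℝ, k4 * (1+|t|)^4 ≤ rhoNorm n (E t) := by
    intro t
    refine le_trans (hk4 |t| (abs_nonneg t)) (max_le (RN_ge1 t) (le_trans ?_ (RN_geD t)))
    exact Δlow t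
  have RN_up : ∀ t:ℝ, rhoNorm n (E t) ≤ (2*K^2) * (1+|t|)^4 := by
    intro t
    have prodb : ∀ (a b c d : Fin (n+2)), a ≠ b → c ≠ d →
        Complex.abs (E t a c) * Complex.abs (E t b d) ≤ K^2 * (1+|t|)^4 := by
      intro a b c d hab hcd
      by_cases h1 : a = i0 n ∧ c = iT n
      · have hb : ¬((b = i0 n ∧ (d = iN n ∨ d = iT n)) ∨ (b = i1 n ∧ d = iT n)) := by
          rintro (⟨hb0, -⟩ | ⟨-, hdT⟩)
          · exact hab (h1.1.trans hb0.symm)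
          · exact hcd (h1.2.trans hdT.symm)
        calc Complex.abs (E t a c) * Complex.abs (E t b d)
            ≤ (K*(1+|t|)^3) * (K*(1+|t|)) :=
              mul_le_mul (bnd3 t a c) (bnd1 t b d hb) (AbsoluteValue.nonneg _ _)
                (by positivity)
          _ = K^2*(1+|t|)^4 := by ring
      · by_cases h2 : b = i0 n ∧ d = iT n
        · have ha : ¬((a = i0 n ∧ (c = iN n ∨ c = iT n)) ∨ (a = i1 n ∧ c = iT n)) := by
            rintro (⟨hb0, -⟩ | ⟨-, hdT⟩)
            · exact hab (hb0.trans h2.1.symm)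
            · exact hcd (hdT.trans h2.2.symm)
          calc Complex.abs (E t a c) * Complex.abs (E t b d)
              ≤ (K*(1+|t|)) * (K*(1+|t|)^3) :=
                mul_le_mul (bnd1 t a c ha) (bnd3 t b d) (AbsoluteValue.nonneg _ _)
                  (by positivity)
            _ = K^2*(1+|t|)^4 := by ring
        · calc Complex.abs (E t a c) * Complex.abs (E t b d)
              ≤ (K*(1+|t|)^2) * (K*(1+|t|)^2) :=
                mul_le_mul (bnd2 t a c h1) (bnd2 t b d h2) (AbsoluteValue.nonneg _ _)
                  (by positivity)
            _ = K^2*(1+|t|)^4 := by ring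
    apply Finset.sup'_le
    rintro ⟨⟨p, q'⟩, r, s'⟩ -
    by_cases hpq : p = q'
    · subst hpq
      have h0 : E t p r * E t p s' - E t p s' * E t p r = 0 := by ring
      rw [h0, norm_zero]
      positivity
    · by_cases hrs : r = s'
      · subst hrs
        have h0 : E t p r * E t q' r - E t p r * E t q' r = 0 := by ring
        rw [h0, norm_zero]
        positivity
      · calc Complex.abs (E t p r * E t q' s' - E t p s' * E t q' r)
            ≤ Complex.abs (E t p r * E t q' s') + Complex.abs (E t p s' * E t q' r) :=
              abs_sub_le' _ _
          _ = Complex.abs (E t p r) * Complex.abs (E t q' s')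
              + Complex.abs (E t p s') * Complex.abs (E t q' r) := by
              rw [map_mul, map_mul]
          _ ≤ K^2*(1+|t|)^4 + K^2*(1+|t|)^4 :=
              add_le_add (prodb p q' r s' hpq hrs)
                (prodb p q' s' r hpq (fun h => hrs h.symm))
          _ = (2*K^2) * (1+|t|)^4 := by ring
  -- final combination
  have h2K : (0:ℝ) < 2*K^2 := by have := pow_pos hKpos 2; linarith
  have hKr : (0:ℝ) < K ^ ((4:ℝ)/3) := Real.rpow_pos_of_pos hKpos _
  have hk3r : (0:ℝ) < k3 ^ ((4:ℝ)/3) := Real.rpow_pos_of_pos hk3pos _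
  refine ⟨k4 / K ^ ((4:ℝ)/3), 2*K^2 / k3 ^ ((4:ℝ)/3),
    div_pos hk4pos hKr, div_pos h2K hk3r, ?_⟩
  intro t
  have hfold : NormedSpace.exp (t • u) = E t := rfl
  rw [hfold]
  have hX : (0:ℝ) < 1+|t| := by positivity
  have hEN1 := EN_ge1 t
  have hENup := EN_up t
  have hENlow := EN_low t
  have hRN1 := RN_ge1 t
  have hRNup := RN_up t
  have hRNlow := RN_low t
  have hENnn : (0:ℝ) ≤ entryNorm n (E t) := by linarith
  constructor
  · have h1 : entryNorm n (E t) ^ ((4:ℝ)/3) ≤ (K*(1+|t|)^3) ^ ((4:ℝ)/3) :=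
      Real.rpow_le_rpow hENnn hENup (by norm_num)
    have h2 : (K*(1+|t|)^3) ^ ((4:ℝ)/3) = K ^ ((4:ℝ)/3) * (1+|t|)^4 := by
      rw [Real.mul_rpow (le_of_lt hKpos) (by positivity), cube_rpow _ (by positivity)]
    have h3 : (k4 / K ^ ((4:ℝ)/3)) * entryNorm n (E t) ^ ((4:ℝ)/3)
        ≤ (k4 / K ^ ((4:ℝ)/3)) * (K ^ ((4:ℝ)/3) * (1+|t|)^4) := by
      apply mul_le_mul_of_nonneg_left _ (le_of_lt (div_pos hk4pos hKr))
      rw [← h2]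
      exact h1
    have h4 : (k4 / K ^ ((4:ℝ)/3)) * (K ^ ((4:ℝ)/3) * (1+|t|)^4) = k4 * (1+|t|)^4 := by
      field_simp
    linarith
  · have h1 : (k3*(1+|t|)^3) ^ ((4:ℝ)/3) ≤ entryNorm n (E t) ^ ((4:ℝ)/3) :=
      Real.rpow_le_rpow (by positivity) hENlow (by norm_num)
    have h2 : (k3*(1+|t|)^3) ^ ((4:ℝ)/3) = k3 ^ ((4:ℝ)/3) * (1+|t|)^4 := by
      rw [Real.mul_rpow (le_of_lt hk3pos) (by positivity), cube_rpow _ (by positivity)]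
    have h3 : (2*K^2 / k3 ^ ((4:ℝ)/3)) * (k3 ^ ((4:ℝ)/3) * (1+|t|)^4)
        = 2*K^2*(1+|t|)^4 := by
      field_simp
    have h4 : (2*K^2/k3^((4:ℝ)/3)) * (k3^((4:ℝ)/3)*(1+|t|)^4)
        ≤ (2*K^2/k3^((4:ℝ)/3)) * entryNorm n (E t) ^ ((4:ℝ)/3) := by
      apply mul_le_mul_of_nonneg_left _ (le_of_lt (div_pos h2K hk3r))
      rw [← h2]
      exact h1
    calc rhoNorm n (E t) ≤ 2*K^2*(1+|t|)^4 := hRNup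
      _ = (2*K^2 / k3 ^ ((4:ℝ)/3)) * (k3 ^ ((4:ℝ)/3) * (1+|t|)^4) := h3.symm
      _ ≤ (2*K^2 / k3 ^ ((4:ℝ)/3)) * entryNorm n (E t) ^ ((4:ℝ)/3) := h4

end Stmt17Aux


theorem stmt17 (n : ℕ) (hn : 2 ≤ n)
    (𝔥 : Submodule ℝ (Matrix (Fin (n+2)) (Fin (n+2)) ℂ))
    (h_sub : ∀ u ∈ 𝔥, inLieN n u)
    (h_bracket : ∀ u ∈ 𝔥, ∀ v ∈ 𝔥, u * v - v * u ∈ 𝔥)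
    (hdim : Module.finrank ℝ 𝔥 = 1)
    (hZ0 : ∀ u : Matrix (Fin (n+2)) (Fin (n+2)) ℂ, inZ n 𝔥 u → u = 0)
    (u : Matrix (Fin (n+2)) (Fin (n+2)) ℂ) (hu : u ∈ 𝔥) (hphi : phiC n u ≠ 0)
    (φ₀ : ℂ) (hφ₀ : φ₀ ≠ 0)
    (hrel : ∀ v ∈ 𝔥, phiC n v = φ₀ * ((syR n v : ℝ) : ℂ) ∧ yV n v = 0) :
    ∃ c C : ℝ, 0 < c ∧ 0 < C ∧
      ∀ h ∈ expSet n 𝔥, c * entryNorm n h ^ ((4:ℝ)/3) ≤ rhoNorm n h ∧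
        rhoNorm n h ≤ C * entryNorm n h ^ ((4:ℝ)/3) := by
  obtain ⟨hUT, hskew⟩ := h_sub u hu
  have hy : yV n u = 0 := (hrel u hu).2
  have hphi' : u (Stmt17Aux.i0 n) (Stmt17Aux.i1 n) ≠ 0 := hphi
  have hs : u (Stmt17Aux.i1 n) (Stmt17Aux.iN n) ≠ 0 := by
    intro h0
    apply hphi
    have h1 : syR n u = 0 := by
      have h2 : syR n u = (u (Stmt17Aux.i1 n) (Stmt17Aux.iN n)).im := rfl
      rw [h2, h0]
      simp
    rw [(hrel u hu).1, h1]
    simp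
  obtain ⟨c, C, hc, hC, hb⟩ := Stmt17Aux.main_aux hn hUT hskew hy hphi' hs
  refine ⟨c, C, hc, hC, ?_⟩
  intro h hh
  obtain ⟨v, hv, rfl⟩ := hh
  have hu0 : u ≠ 0 := by
    intro h0
    exact hphi (by simp [phiC, h0])
  have hnz : (⟨u, hu⟩ : 𝔥) ≠ 0 := by
    simp only [ne_eq, Submodule.mk_eq_zero]
    exact hu0
  obtain ⟨t, ht⟩ := (finrank_eq_one_iff_of_nonzero' (⟨u, hu⟩ : 𝔥) hnz).mp hdim ⟨v, hv⟩
  have hv' : v = t • u := by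
    have h2 := congrArg Subtype.val ht
    simpa using h2.symm
  rw [hv']
  exact hb t
end
end
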